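/- arXiv:2201.09269 — 10 statements merged into one kernel-verified Lean document; each statement's English description precedes it below -/
import Mathlib

section
/- For every connected graph G of order n ≥ 2, the remoteness ρ(G) (the maximum over vertices v of the average distance from v to all other vertices) satisfies ρ(G) ≤ n/2, with equality if and only if G is a path. -/
/-!
Fix a vertex `v` and write `d = G.dist v`. Along a shortest walk from `v` to `u` every value
`k ≤ d u` is attained by `d`, so `d u ≤ #{w | d w < d u}`. Summing over `u` and using the
symmetry `(u, w) ↦ (w, u)`, `2 ∑ d` is at most the number of ordered pairs `(u, w)` with
`d u ≠ d w`, hence at most `n (n - 1)`, with equality only if `d` is injective. An injective `d`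
is a bijection onto `{0, …, n - 1}`, and a vertex at level `k + 1` has a neighbour at level `k`,
so `d` is an isomorphism onto the path; conversely, from an end vertex of a path the distances
are `0, 1, …, n - 1`.
-/

open Finset

section Counting

variable {V : Type*} [Fintype V]

lemma sum_card_filter_lt_eq_sum_card_filter_gt (f : V → ℕ) :
    ∑ u, #{w | f w < f u} = ∑ u, #{w | f u < f w} := by
  simp only [card_filter]
  exact sum_comm

lemma card_filter_ne_le (f : V → ℕ) (u : V) : #{w | f w ≠ f u} ≤ Fintype.card V - 1 := by
  classical
  rw [← card_univ, ← card_erase_of_mem (mem_univ u)]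
  exact card_le_card fun w hw => mem_erase.2 ⟨by rintro rfl; simp at hw, mem_univ w⟩

lemma card_filter_ne_lt {f : V → ℕ} {a b : V} (hab : a ≠ b) (hf : f a = f b) :
    #{w | f w ≠ f a} < Fintype.card V - 1 := by
  classical
  rw [← card_univ, ← card_erase_of_mem (mem_univ a)]
  refine card_lt_card ((ssubset_iff_of_subset fun w hw => ?_).2 ⟨b, ?_, by simp [hf]⟩)
  · exact mem_erase.2 ⟨by rintro rfl; simp at hw, mem_univ w⟩
  · exact mem_erase.2 ⟨Ne.symm hab, mem_univ b⟩

lemma two_mul_sum_le_sum_card_filter_ne {f : V → ℕ} (hf : ∀ u, f u ≤ #{w | f w < f u}) :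
    2 * ∑ u, f u ≤ ∑ u, #{w | f w ≠ f u} := by
  classical
  calc 2 * ∑ u, f u ≤ ∑ u, #{w | f w < f u} + ∑ u, #{w | f u < f w} := by
        rw [two_mul, ← sum_card_filter_lt_eq_sum_card_filter_gt]
        gcongr with u <;> exact hf u
    _ = ∑ u, #{w | f w ≠ f u} := by
        rw [← sum_add_distrib]
        refine sum_congr rfl fun u _ => ?_
        rw [← card_union_of_disjoint (disjoint_filter.2 fun _ _ h₁ h₂ => (h₁.trans h₂).false),
          ← filter_or]
        simp only [ne_iff_lt_or_gt]

theorem two_mul_sum_le_card_mul_card_sub_one {f : V → ℕ} (hf : ∀ u, f u ≤ #{w | f w < f u}) :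
    2 * ∑ u, f u ≤ Fintype.card V * (Fintype.card V - 1) :=
  calc 2 * ∑ u, f u ≤ ∑ u, #{w | f w ≠ f u} := two_mul_sum_le_sum_card_filter_ne hf
    _ ≤ ∑ _u : V, (Fintype.card V - 1) := sum_le_sum fun u _ => card_filter_ne_le f u
    _ = Fintype.card V * (Fintype.card V - 1) := by simp

theorem injective_of_two_mul_sum_eq {f : V → ℕ} (hf : ∀ u, f u ≤ #{w | f w < f u})
    (h : 2 * ∑ u, f u = Fintype.card V * (Fintype.card V - 1)) : Function.Injective f := by
  intro a b hfab
  by_contra hab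
  have hlt : ∑ u, #{w | f w ≠ f u} < ∑ _u : V, (Fintype.card V - 1) :=
    sum_lt_sum (fun u _ => card_filter_ne_le f u) ⟨a, mem_univ a, card_filter_ne_lt hab hfab⟩
  have := two_mul_sum_le_sum_card_filter_ne hf
  simp only [sum_const, card_univ, smul_eq_mul] at hlt
  omega

end Counting

namespace SimpleGraph

variable {V : Type*} {G : SimpleGraph V} {u v : V}

lemma Walk.dist_getVert_of_length_eq_dist {p : G.Walk u v} (hp : p.length = G.dist u v)
    {k : ℕ} (hk : k ≤ p.length) : G.dist u (p.getVert k) = k := by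
  rw [← length_eq_dist_of_subwalk hp (p.isSubwalk_take k), take_length, min_eq_left hk]

lemma Reachable.exists_dist_eq_of_le (h : G.Reachable v u) {k : ℕ} (hk : k ≤ G.dist v u) :
    ∃ w, G.dist v w = k := by
  obtain ⟨p, hp⟩ := h.exists_walk_length_eq_dist
  exact ⟨p.getVert k, p.dist_getVert_of_length_eq_dist hp (hp ▸ hk)⟩

lemma exists_adj_dist_eq_of_dist_eq_add_one {k : ℕ} (hk : G.dist v u = k + 1) :
    ∃ w, G.Adj w u ∧ G.dist v w = k := by
  obtain ⟨p, hp⟩ :=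
    (Reachable.of_dist_ne_zero (by omega : G.dist v u ≠ 0)).exists_walk_length_eq_dist
  refine ⟨p.getVert k, ?_, p.dist_getVert_of_length_eq_dist hp (by omega)⟩
  simpa [show k + 1 = p.length by omega] using p.adj_getVert_succ (show k < p.length by omega)

lemma Walk.apply_le_apply_add_length {φ : V → ℕ} (hφ : ∀ a b, G.Adj a b → φ b ≤ φ a + 1)
    (p : G.Walk v u) : φ u ≤ φ v + p.length := by
  induction p with
  | nil => simp
  | cons h _ ih => have := hφ _ _ h; rw [length_cons]; omega

lemma Reachable.apply_le_apply_add_dist {φ : V → ℕ} (hφ : ∀ a b, G.Adj a b → φ b ≤ φ a + 1)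
    (h : G.Reachable v u) : φ u ≤ φ v + G.dist v u := by
  obtain ⟨p, hp⟩ := h.exists_walk_length_eq_dist
  exact hp ▸ p.apply_le_apply_add_length hφ

variable [Fintype V]

lemma Reachable.dist_le_card_filter_dist_lt (h : G.Reachable v u) :
    G.dist v u ≤ #{w | G.dist v w < G.dist v u} := by
  classical
  calc G.dist v u = #(range (G.dist v u)) := (card_range _).symm
    _ ≤ #(image (G.dist v) {w | G.dist v w < G.dist v u}) := card_le_card fun k hk => by
        obtain ⟨w, hw⟩ := h.exists_dist_eq_of_le (mem_range.1 hk).le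
        exact mem_image.2 ⟨w, by simpa [hw] using hk, hw⟩
    _ ≤ _ := card_image_le

lemma Reachable.dist_lt_card (h : G.Reachable v u) : G.dist v u < Fintype.card V :=
  h.dist_le_card_filter_dist_lt.trans_lt <|
    card_lt_card <| filter_ssubset.2 ⟨u, mem_univ u, lt_irrefl _⟩

theorem Connected.two_mul_sum_dist_le (hG : G.Connected) (v : V) :
    2 * ∑ u, G.dist v u ≤ Fintype.card V * (Fintype.card V - 1) :=
  two_mul_sum_le_card_mul_card_sub_one fun u => (hG v u).dist_le_card_filter_dist_lt

theorem Connected.injective_dist_of_two_mul_sum_dist_eq (hG : G.Connected) (v : V)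
    (h : 2 * ∑ u, G.dist v u = Fintype.card V * (Fintype.card V - 1)) :
    Function.Injective (G.dist v) :=
  injective_of_two_mul_sum_eq (fun u => (hG v u).dist_le_card_filter_dist_lt) h

theorem Connected.nonempty_iso_pathGraph_of_injective_dist (hG : G.Connected) {n : ℕ}
    (hn : Fintype.card V = n) (hinj : Function.Injective (G.dist v)) :
    Nonempty (G ≃g pathGraph n) := by
  let d : V → Fin n := fun u => ⟨G.dist v u, hn ▸ (hG v u).dist_lt_card⟩
  have hd : Function.Bijective d :=
    (Fintype.bijective_iff_injective_and_card d).2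
      ⟨fun a b hab => hinj (congrArg Fin.val hab), by simp [hn]⟩
  refine ⟨⟨Equiv.ofBijective d hd, fun {a b} => ?_⟩⟩
  simp only [Equiv.ofBijective_apply, pathGraph_adj, d]
  refine ⟨?_, fun hab => ?_⟩
  · rintro (h | h)
    · obtain ⟨c, hcb, hc⟩ := exists_adj_dist_eq_of_dist_eq_add_one h.symm
      rwa [hinj hc] at hcb
    · obtain ⟨c, hca, hc⟩ := exists_adj_dist_eq_of_dist_eq_add_one h.symm
      exact (hinj hc ▸ hca).symm
  · have hne : G.dist v a ≠ G.dist v b := fun h => hab.ne (hinj h)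
    have := hab.diff_dist_adj (u := v)
    omega

theorem Connected.card_mul_le_two_mul_sum_dist_of_iso_pathGraph (hG : G.Connected) {n : ℕ}
    (e : G ≃g pathGraph n) (hv : (e v).val = 0) :
    n * (n - 1) ≤ 2 * ∑ u, G.dist v u := by
  have hφ : ∀ a b, G.Adj a b → (e b).val ≤ (e a).val + 1 := fun a b h => by
    have := pathGraph_adj.1 (e.map_adj_iff.2 h)
    omega
  calc n * (n - 1) = 2 * ∑ i : Fin n, i.val := by
        rw [Fin.sum_univ_eq_sum_range (fun i => i), ← sum_range_id_mul_two, mul_comm]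
    _ = 2 * ∑ u, (e u).val := congrArg (2 * ·) (e.toEquiv.sum_comp (fun i : Fin n => i.val)).symm
    _ ≤ 2 * ∑ u, G.dist v u := by
        gcongr with u
        simpa [hv] using (hG v u).apply_le_apply_add_dist hφ

end SimpleGraph

lemma div_sub_one_le_half_iff {S n : ℕ} (hn : 2 ≤ n) :
    (S : ℝ) / (n - 1) ≤ n / 2 ↔ 2 * S ≤ n * (n - 1) := by
  have hpos : (0 : ℝ) < n - 1 := sub_pos.2 (by exact_mod_cast hn)
  rw [div_le_div_iff₀ hpos two_pos, ← Nat.cast_le (α := ℝ)]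
  push_cast [Nat.cast_sub (by omega : 1 ≤ n)]
  constructor <;> intro h <;> linarith

lemma div_sub_one_eq_half_iff {S n : ℕ} (hn : 2 ≤ n) :
    (S : ℝ) / (n - 1) = n / 2 ↔ 2 * S = n * (n - 1) := by
  have hpos : (0 : ℝ) < n - 1 := sub_pos.2 (by exact_mod_cast hn)
  rw [div_eq_div_iff hpos.ne' two_ne_zero, ← Nat.cast_inj (R := ℝ)]
  push_cast [Nat.cast_sub (by omega : 1 ≤ n)]
  constructor <;> intro h <;> linarith

theorem remoteness_le_half_order {V : Type*} [Fintype V] [Nonempty V]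
    (G : SimpleGraph V) (hG : G.Connected)
    (n : ℕ) (hn : Fintype.card V = n) (hn2 : 2 ≤ n) :
    Finset.univ.sup' Finset.univ_nonempty
        (fun v => (∑ u, (G.dist v u : ℝ)) / (n - 1)) ≤ (n : ℝ) / 2 ∧
    (Finset.univ.sup' Finset.univ_nonempty
        (fun v => (∑ u, (G.dist v u : ℝ)) / (n - 1)) = (n : ℝ) / 2 ↔
      Nonempty (G ≃g SimpleGraph.pathGraph n)) := by
  simp only [← Nat.cast_sum]
  have hle : ∀ v, 2 * ∑ u, G.dist v u ≤ n * (n - 1) := hn ▸ hG.two_mul_sum_dist_le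
  have hsup := sup'_le univ_nonempty _ fun v _ => (div_sub_one_le_half_iff hn2).2 (hle v)
  refine ⟨hsup, fun h => ?_, fun ⟨e⟩ => ?_⟩
  · obtain ⟨v, -, hv⟩ := exists_mem_eq_sup' univ_nonempty
      (fun v => ((∑ u, G.dist v u : ℕ) : ℝ) / (n - 1))
    rw [hv, div_sub_one_eq_half_iff hn2, ← hn] at h
    exact hG.nonempty_iso_pathGraph_of_injective_dist hn
      (hG.injective_dist_of_two_mul_sum_dist_eq v h)
  · set v := e.symm ⟨0, by omega⟩
    have hv : 2 * ∑ u, G.dist v u = n * (n - 1) :=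
      (hle v).antisymm (hG.card_mul_le_two_mul_sum_dist_of_iso_pathGraph e (by simp [v]))
    refine hsup.antisymm ?_
    calc (n : ℝ) / 2 = ((∑ u, G.dist v u : ℕ) : ℝ) / (n - 1) :=
          ((div_sub_one_eq_half_iff hn2).2 hv).symm
      _ ≤ _ := le_sup' (fun v => ((∑ u, G.dist v u : ℕ) : ℝ) / (n - 1)) (mem_univ v)
end

section
/- For every connected graph G of even order n ≥ 2, the proximity satisfies π(G) ≤ (n+1)/4 + 1/(4(n-1)). -/
/-!
Distances in a spanning tree `T` of `G` dominate those in `G`, so it suffices to find a vertex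
`c` of a tree on `n = 2M` vertices with `∑ w, d(c, w) ≤ M²`; indeed
`M² / (n - 1) = (n + 1) / 4 + 1 / (4 (n - 1))`.

Take `c` of least transmission in `T`. The other vertices split into the branches of `T` at the
neighbours of `c`, and comparing `c` with a neighbour `b` shows that the branch at `b` has at
most `n / 2 = M` vertices. A branch with `m` vertices has vertices at every distance
`1, …, d` from `c` as soon as it has one at distance `d`, so its distances from `c` sum to at
most `1 + ⋯ + m`. The branch sizes are at most `M` and sum to `2M - 1`, so at most one of them
equals `M`, and then `∑ mᵢ (mᵢ + 1) / 2 ≤ M²`.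
-/

open Finset SimpleGraph

namespace Finset

variable {ι : Type*} {s : Finset ι} {f : ι → ℕ}

theorem card_filter_lt_le_card_sub (hf : ∀ i ∈ s, Icc 1 (f i) ⊆ s.image f) (k : ℕ) :
    #{i ∈ s | k < f i} ≤ #s - k := by
  rcases eq_empty_or_nonempty {i ∈ s | k < f i} with hempty | ⟨i, hi⟩
  · simp [hempty]
  rw [mem_filter] at hi
  have hsmall : Icc 1 k ⊆ {i ∈ s | ¬k < f i}.image f := by
    intro j hj
    obtain ⟨i', hi', rfl⟩ := mem_image.1 (hf i hi.1 (Icc_subset_Icc_right hi.2.le hj))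
    exact mem_image_of_mem f (mem_filter.2 ⟨hi', by simp only [mem_Icc] at hj; omega⟩)
  have hk : k ≤ #{i ∈ s | ¬k < f i} := by
    simpa using (card_le_card hsmall).trans card_image_le
  have := card_filter_add_card_filter_not (s := s) (fun i => k < f i)
  omega

theorem two_mul_sum_le_card_mul_card_succ (hf : ∀ i ∈ s, Icc 1 (f i) ⊆ s.image f) :
    2 * ∑ i ∈ s, f i ≤ #s * (#s + 1) := by
  have hbound : ∀ i ∈ s, f i < #s + 1 := by
    intro i hi
    by_contra! h
    have := card_filter_lt_le_card_sub hf #s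
    rw [Nat.sub_self, Nat.le_zero, card_eq_zero, filter_eq_empty_iff] at this
    exact this hi (by omega)
  have hlayer : ∑ i ∈ s, f i = ∑ k ∈ range (#s + 1), #{i ∈ s | k < f i} := by
    simp_rw [card_filter]
    rw [sum_comm]
    refine sum_congr rfl fun i hi => ?_
    rw [← card_filter, show {k ∈ range (#s + 1) | k < f i} = range (f i) by
      ext k; simp only [mem_filter, mem_range]; have := hbound i hi; omega, card_range]
  have hgauss : 2 * ∑ k ∈ range (#s + 1), (#s - k) = #s * (#s + 1) := by
    have := sum_range_reflect (fun k => k) (#s + 1)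
    simp only [add_tsub_cancel_right] at this
    rw [this, mul_comm, sum_range_id_mul_two, add_tsub_cancel_right, mul_comm]
  calc 2 * ∑ i ∈ s, f i ≤ 2 * ∑ k ∈ range (#s + 1), (#s - k) := by
        rw [hlayer]
        gcongr with k
        exact card_filter_lt_le_card_sub hf k
    _ = #s * (#s + 1) := hgauss

theorem sum_mul_succ_le_two_mul_mul_self (m : ι → ℕ) (M : ℕ) (hle : ∀ i ∈ s, m i ≤ M)
    (hsum : ∑ i ∈ s, m i + 1 = 2 * M) : ∑ i ∈ s, m i * (m i + 1) ≤ 2 * (M * M) := by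
  have hone : #{i ∈ s | m i = M} ≤ 1 := by
    have : M * #{i ∈ s | m i = M} ≤ ∑ i ∈ s, m i :=
      calc M * #{i ∈ s | m i = M} = ∑ i ∈ s with m i = M, m i := by
            rw [sum_congr rfl fun i hi => (mem_filter.1 hi).2, sum_const, smul_eq_mul, mul_comm]
        _ ≤ ∑ i ∈ s, m i := sum_le_sum_of_subset (filter_subset _ _)
    by_contra! h
    nlinarith
  have hterm : ∀ i ∈ s, m i * (m i + 1) ≤ M * m i + M * if m i = M then 1 else 0 := by
    intro i hi
    split_ifs with h
    · rw [h, mul_add, mul_one]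
    · have : m i + 1 ≤ M := by have := hle i hi; omega
      nlinarith
  calc ∑ i ∈ s, m i * (m i + 1) ≤ ∑ i ∈ s, (M * m i + M * if m i = M then 1 else 0) :=
        sum_le_sum hterm
    _ = M * ∑ i ∈ s, m i + M * #{i ∈ s | m i = M} := by
        rw [sum_add_distrib, ← mul_sum, ← mul_sum, sum_boole]
        simp
    _ ≤ M * (∑ i ∈ s, m i + 1) := by nlinarith
    _ = 2 * (M * M) := by rw [hsum]; ring

end Finset

namespace SimpleGraph

variable {V : Type*} {G T : SimpleGraph V} {u v w b c : V}

lemma Walk.dist_add_dist_le_length (p : G.Walk u v) (hw : w ∈ p.support) :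
    G.dist u w + G.dist w v ≤ p.length := by
  classical
  have hsplit := congrArg Walk.length (p.take_spec hw)
  rw [Walk.length_append] at hsplit
  have := dist_le (p.takeUntil w hw)
  have := dist_le (p.dropUntil w hw)
  omega

lemma Connected.exists_adj_dist_eq_add_one (hG : G.Connected) (hne : u ≠ v) :
    ∃ b, G.Adj u b ∧ G.dist u v = G.dist b v + 1 := by
  obtain ⟨p, hp⟩ := hG.exists_walk_length_eq_dist u v
  cases p with
  | nil => exact absurd rfl hne
  | @cons _ b _ hadj q =>
    refine ⟨b, hadj, le_antisymm ?_ ?_⟩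
    · have := hG.dist_triangle (u := u) (v := b) (w := v)
      rw [dist_eq_one_iff_adj.2 hadj] at this
      omega
    · have := dist_le q
      rw [Walk.length_cons] at hp
      omega

/-- For a tree and a neighbour `b` of `c`: the vertex set of the component of `T - c`
containing `b`. -/
noncomputable def branch [Fintype V] (G : SimpleGraph V) (c b : V) : Finset V :=
  {w | G.dist c w = G.dist b w + 1}

lemma mem_branch [Fintype V] : w ∈ G.branch c b ↔ G.dist c w = G.dist b w + 1 := by
  simp [branch]

lemma Connected.Icc_subset_image_dist_branch [Fintype V] (hG : G.Connected) (hb : G.Adj c b)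
    (hw : w ∈ G.branch c b) : Icc 1 (G.dist c w) ⊆ (G.branch c b).image (G.dist c) := by
  intro j hj
  rw [mem_branch] at hw
  rw [mem_Icc] at hj
  obtain ⟨q, hq⟩ := hG.exists_walk_length_eq_dist b w
  set x := q.getVert (j - 1)
  have hbx : G.dist b x ≤ j - 1 := (dist_le (q.take (j - 1))).trans (by simp)
  have hxw : G.dist x w ≤ q.length - (j - 1) := (dist_le (q.drop (j - 1))).trans (by simp)
  have hcx := hG.dist_triangle (u := c) (v := b) (w := x)
  have hcw := hG.dist_triangle (u := c) (v := x) (w := w)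
  rw [dist_eq_one_iff_adj.2 hb] at hcx
  refine mem_image.2 ⟨x, mem_branch.2 ?_, ?_⟩ <;> omega

lemma Connected.two_mul_sum_dist_branch_le [Fintype V] (hG : G.Connected) (hb : G.Adj c b) :
    2 * ∑ w ∈ G.branch c b, G.dist c w ≤ #(G.branch c b) * (#(G.branch c b) + 1) :=
  two_mul_sum_le_card_mul_card_succ fun _ hw => hG.Icc_subset_image_dist_branch hb hw

lemma IsTree.dist_eq_add_one_or (hT : T.IsTree) (hbc : T.Adj b c) (x : V) :
    T.dist c x = T.dist b x + 1 ∨ T.dist b x = T.dist c x + 1 := by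
  obtain ⟨p, hp, hpl⟩ := hT.connected.exists_path_of_dist x b
  obtain ⟨q, hq, hql⟩ := hT.connected.exists_path_of_dist x c
  have h₁ := hT.connected.dist_triangle (u := x) (v := b) (w := c)
  have h₂ := hT.connected.dist_triangle (u := x) (v := c) (w := b)
  rw [dist_eq_one_iff_adj.2 hbc] at h₁
  rw [dist_eq_one_iff_adj.2 hbc.symm] at h₂
  rw [dist_comm (u := c), dist_comm (u := b)]
  by_cases hb : b ∈ q.support
  · have := q.dist_add_dist_le_length hb
    rw [dist_eq_one_iff_adj.2 hbc] at this
    omega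
  · have := p.dist_add_dist_le_length
      (hT.isAcyclic.mem_support_of_ne_mem_support_of_adj_of_isPath hp hq hbc hb)
    rw [dist_eq_one_iff_adj.2 hbc.symm] at this
    omega

lemma IsTree.eq_of_mem_branch [Fintype V] (hT : T.IsTree) {b' : V} (hb : T.Adj c b)
    (hb' : T.Adj c b') (hw : w ∈ T.branch c b) (hw' : w ∈ T.branch c b') : b = b' := by
  rw [mem_branch] at hw hw'
  obtain ⟨q, hq⟩ := hT.connected.exists_walk_length_eq_dist b w
  obtain ⟨q', hq'⟩ := hT.connected.exists_walk_length_eq_dist b' w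
  have hp : (Walk.cons hb q).IsPath := Walk.isPath_of_length_eq_dist _ (by simp [hq, hw])
  have hp' : (Walk.cons hb' q').IsPath := Walk.isPath_of_length_eq_dist _ (by simp [hq', hw'])
  simpa using congrArg Walk.snd ((hT.existsUnique_path c w).unique hp hp')

lemma IsTree.two_mul_card_branch_le [Fintype V] (hT : T.IsTree) (hb : T.Adj c b)
    (hmin : ∑ w, T.dist c w ≤ ∑ w, T.dist b w) :
    2 * #(T.branch c b) ≤ Fintype.card V := by
  -- moving from `c` to `b` brings the branch one step closer and every other vertex one further
  have hterm : ∀ w, T.dist b w + 2 * (if T.dist c w = T.dist b w + 1 then 1 else 0) =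
      T.dist c w + 1 := by
    intro w
    rcases hT.dist_eq_add_one_or hb.symm w with h | h <;> split_ifs <;> omega
  have hsum := sum_congr rfl fun w (_ : w ∈ univ) => hterm w
  rw [sum_add_distrib, sum_add_distrib, ← mul_sum, sum_boole, sum_const, card_univ] at hsum
  simp only [Nat.cast_id, smul_eq_mul, mul_one] at hsum
  change _ + 2 * #(T.branch c b) = _ at hsum
  omega

theorem IsTree.exists_sum_dist_le_mul_self [Fintype V] (hT : T.IsTree) {M : ℕ}
    (hcard : Fintype.card V = 2 * M) : ∃ c, ∑ w, T.dist c w ≤ M * M := by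
  classical
  have := hT.connected.nonempty
  obtain ⟨c, -, hc⟩ := exists_min_image univ (fun x => ∑ w, T.dist x w) univ_nonempty
  refine ⟨c, ?_⟩
  set N : Finset V := {b | T.Adj c b}
  have hdisj : (N : Set V).PairwiseDisjoint (T.branch c) := fun b hb b' hb' hne =>
    Finset.disjoint_left.2 fun _ hw hw' =>
      hne (hT.eq_of_mem_branch (by simpa [N] using hb) (by simpa [N] using hb') hw hw')
  have hcover : N.biUnion (T.branch c) = univ.erase c := by
    ext w
    simp only [mem_biUnion, mem_erase, mem_univ, and_true, N, mem_filter, true_and]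
    constructor
    · rintro ⟨b, -, hw⟩ rfl
      simp [mem_branch] at hw
    · intro hw
      obtain ⟨b, hb, hwb⟩ := hT.connected.exists_adj_dist_eq_add_one (Ne.symm hw)
      exact ⟨b, hb, mem_branch.2 hwb⟩
  have hsum : ∑ w, T.dist c w = ∑ b ∈ N, ∑ w ∈ T.branch c b, T.dist c w := by
    rw [← sum_biUnion hdisj, hcover, sum_erase _ dist_self]
  have hcard_branches : ∑ b ∈ N, #(T.branch c b) + 1 = 2 * M := by
    rw [← card_biUnion hdisj, hcover, card_erase_add_one (mem_univ c), card_univ, hcard]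
  have hbranch_le : ∀ b ∈ N, #(T.branch c b) ≤ M := fun b hb => by
    have := hT.two_mul_card_branch_le (by simpa [N] using hb) (hc b (mem_univ b))
    omega
  have : 2 * ∑ w, T.dist c w ≤ 2 * (M * M) :=
    calc 2 * ∑ w, T.dist c w = ∑ b ∈ N, 2 * ∑ w ∈ T.branch c b, T.dist c w := by
          rw [hsum, mul_sum]
      _ ≤ ∑ b ∈ N, #(T.branch c b) * (#(T.branch c b) + 1) :=
          sum_le_sum fun b hb => hT.connected.two_mul_sum_dist_branch_le (by simpa [N] using hb)
      _ ≤ 2 * (M * M) := sum_mul_succ_le_two_mul_mul_self _ M hbranch_le hcard_branches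
  omega

end SimpleGraph

theorem proximity_le_of_even_order {V : Type*} [Fintype V] [Nonempty V]
    (G : SimpleGraph V) (hG : G.Connected)
    (n : ℕ) (hn : Fintype.card V = n) (hn2 : 2 ≤ n) (heven : Even n) :
    Finset.univ.inf' Finset.univ_nonempty
        (fun v => (∑ u, (G.dist v u : ℝ)) / (n - 1)) ≤
      ((n : ℝ) + 1) / 4 + 1 / (4 * ((n : ℝ) - 1)) := by
  obtain ⟨M, rfl⟩ := heven
  obtain ⟨T, hTG, hT⟩ := hG.exists_isTree_le
  obtain ⟨c, hc⟩ := hT.exists_sum_dist_le_mul_self (M := M) (by omega)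
  have hGc : ∑ u, G.dist c u ≤ M * M :=
    (sum_le_sum fun u _ => (hT.connected c u).dist_anti hTG).trans hc
  have hpos : (0 : ℝ) < ((M + M : ℕ) : ℝ) - 1 := by
    have : (2 : ℝ) ≤ ((M + M : ℕ) : ℝ) := by exact_mod_cast hn2
    linarith
  calc univ.inf' univ_nonempty (fun v => (∑ u, (G.dist v u : ℝ)) / ((M + M : ℕ) - 1))
      ≤ (∑ u, (G.dist c u : ℝ)) / ((M + M : ℕ) - 1) := inf'_le _ (mem_univ c)
    _ ≤ (M * M : ℕ) / (((M + M : ℕ) : ℝ) - 1) := by gcongr; exact_mod_cast hGc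
    _ = _ := by field_simp; push_cast; ring
end

section
/- Let T be a finite tree with a nonnegative real weight function c on its vertices. A vertex v of T is a c-median vertex (i.e., minimizes the weighted distance σ_c(v) = Σ_{w≠v} c(w)d(v,w)) if and only if the c-branch weight of v, defined as the maximum total weight of a component of T − v, is at most c(T)/2, where c(T) is the total weight of T. -/
/-!
Moving from `v` to a neighbour `u` brings every vertex of the component `K` of `T - v` containing
`u` one step closer and every other vertex one step further away, so
`σ_c(u) = σ_c(v) + c(T) - 2 c(K)`; since every component of `T - v` contains a neighbour of `v`,
this gives one direction. Conversely, for any `u ≠ v` in the component `K`, the triangle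
inequality on `K` and the fact that every walk from `u` out of `K` passes through `v` give
`σ_c(u) ≥ σ_c(v) + d(v, u) (c(T) - 2 c(K))`.
-/

open Finset
open scoped Classical

namespace SimpleGraph

variable {V : Type*} {G : SimpleGraph V}

lemma reachable_induce_iff {s : Set V} {a b : V} (ha : a ∈ s) (hb : b ∈ s) :
    (G.induce s).Reachable ⟨a, ha⟩ ⟨b, hb⟩ ↔ ∃ p : G.Walk a b, ∀ x ∈ p.support, x ∈ s := by
  refine ⟨fun ⟨q⟩ => ⟨q.map (Embedding.induce s).toHom, fun x hx => ?_⟩,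
    fun ⟨p, hp⟩ => (p.induce s hp).reachable⟩
  obtain ⟨y, -, rfl⟩ := List.mem_map.mp (Walk.support_map _ q ▸ hx)
  exact y.2

lemma reachable_induce_compl_singleton_iff {v a b : V} (ha : a ∈ ({v}ᶜ : Set V))
    (hb : b ∈ ({v}ᶜ : Set V)) :
    (G.induce {v}ᶜ).Reachable ⟨a, ha⟩ ⟨b, hb⟩ ↔ ∃ p : G.Walk a b, v ∉ p.support := by
  rw [reachable_induce_iff]
  exact exists_congr fun p => ⟨fun h hv => h v hv rfl, fun h x hx hxv => h (hxv ▸ hx)⟩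

lemma Connected.exists_adj_connectedComponentMk_eq (hG : G.Connected) {v : V}
    (K : (G.induce {v}ᶜ).ConnectedComponent) :
    ∃ u, ∃ hu : G.Adj v u, (G.induce {v}ᶜ).connectedComponentMk ⟨u, hu.ne'⟩ = K := by
  obtain ⟨⟨x, hx⟩, rfl⟩ := K.exists_rep
  obtain ⟨p, hp⟩ := (hG v x).exists_isPath
  cases p with
  | nil => exact absurd rfl hx
  | cons hadj q =>
    rw [Walk.cons_isPath_iff] at hp
    exact ⟨_, hadj, ConnectedComponent.eq.mpr
      ((reachable_induce_compl_singleton_iff _ _).mpr ⟨q, hp.2⟩)⟩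

lemma Reachable.dist_eq_add_of_forall_mem_support {u v w : V} (hr : G.Reachable u w)
    (h : ∀ p : G.Walk u w, v ∈ p.support) : G.dist u w = G.dist u v + G.dist v w := by
  obtain ⟨p, hp⟩ := hr.exists_walk_length_eq_dist
  refine le_antisymm ((p.takeUntil v (h p)).reachable.dist_triangle_left w) ?_
  calc G.dist u v + G.dist v w
      ≤ (p.takeUntil v (h p)).length + (p.dropUntil v (h p)).length :=
        add_le_add (dist_le _) (dist_le _)
    _ = G.dist u w := by rw [← Walk.length_append, Walk.take_spec, hp]

lemma IsAcyclic.length_eq_dist (hG : G.IsAcyclic) {u w : V} {p : G.Walk u w} (hp : p.IsPath) :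
    p.length = G.dist u w := by
  obtain ⟨q, hq, hq_len⟩ := p.reachable.exists_path_of_dist
  rw [← hq_len, Subtype.mk.inj ((hG.subsingleton_path u w).elim ⟨p, hp⟩ ⟨q, hq⟩)]

lemma IsAcyclic.dist_eq_dist_add_one_of_adj_of_walk (hG : G.IsAcyclic) {u v w : V}
    (hadj : G.Adj v u) (q : G.Walk u w) (hq : v ∉ q.support) :
    G.dist v w = G.dist u w + 1 := by
  have hq' : v ∉ q.toPath.val.support := fun h => hq (q.support_toPath_subset_support h)
  rw [← hG.length_eq_dist (q.toPath.2.cons hq' (h := hadj)), ← hG.length_eq_dist q.toPath.2,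
    Walk.length_cons]

variable [Fintype V]

noncomputable def weightedDist (G : SimpleGraph V) (c : V → ℝ) (v : V) : ℝ :=
  ∑ w, c w * G.dist v w

noncomputable def branchWeight (G : SimpleGraph V) (c : V → ℝ) {v : V}
    (K : (G.induce {v}ᶜ).ConnectedComponent) : ℝ :=
  ∑ w, if ∃ hw : w ∈ ({v}ᶜ : Set V), (G.induce {v}ᶜ).connectedComponentMk ⟨w, hw⟩ = K
    then c w else 0

lemma branchWeight_connectedComponentMk (c : V → ℝ) {u v : V} (hu : u ∈ ({v}ᶜ : Set V)) :
    G.branchWeight c ((G.induce {v}ᶜ).connectedComponentMk ⟨u, hu⟩) =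
      ∑ w, if ∃ p : G.Walk u w, v ∉ p.support then c w else 0 := by
  refine sum_congr rfl fun w _ => if_congr ⟨fun ⟨hw, hK⟩ => ?_, fun ⟨p, hp⟩ => ?_⟩ rfl rfl
  · exact (reachable_induce_compl_singleton_iff hu hw).mp (ConnectedComponent.eq.mp hK).symm
  · have hw : w ∈ ({v}ᶜ : Set V) := fun hwv => hp (hwv ▸ p.end_mem_support)
    exact ⟨hw, ConnectedComponent.eq.mpr
      ((reachable_induce_compl_singleton_iff hu hw).mpr ⟨p, hp⟩).symm⟩

lemma IsTree.weightedDist_of_adj (hT : G.IsTree) (c : V → ℝ) {u v : V} (hu : G.Adj v u) :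
    G.weightedDist c u = G.weightedDist c v + ∑ w, c w
      - 2 * G.branchWeight c ((G.induce {v}ᶜ).connectedComponentMk ⟨u, hu.ne'⟩) := by
  have key (w : V) : c w * G.dist u w = c w * G.dist v w + c w
      - 2 * if ∃ p : G.Walk u w, v ∉ p.support then c w else 0 := by
    split_ifs with h
    · obtain ⟨p, hp⟩ := h
      rw [hT.isAcyclic.dist_eq_dist_add_one_of_adj_of_walk hu p hp]
      push_cast
      ring
    · simp only [not_exists, not_not] at h
      rw [(hT.connected u w).dist_eq_add_of_forall_mem_support h, dist_eq_one_iff_adj.mpr hu.symm]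
      push_cast
      ring
  rw [branchWeight_connectedComponentMk c (v := v) hu.ne']
  simp only [weightedDist, key, sum_sub_distrib, sum_add_distrib, mul_sum]

lemma Connected.weightedDist_add_dist_mul_le (hG : G.Connected) {c : V → ℝ} (hc : ∀ w, 0 ≤ c w)
    {u v : V} (hu : u ∈ ({v}ᶜ : Set V)) :
    G.weightedDist c v + G.dist v u
      * (∑ w, c w - 2 * G.branchWeight c ((G.induce {v}ᶜ).connectedComponentMk ⟨u, hu⟩))
      ≤ G.weightedDist c u := by
  have key (w : V) : c w * G.dist v w + G.dist v u
      * (c w - 2 * if ∃ p : G.Walk u w, v ∉ p.support then c w else 0) ≤ c w * G.dist u w := by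
    split_ifs with h
    · have htri : (G.dist v w : ℝ) ≤ G.dist v u + G.dist u w := by exact_mod_cast hG.dist_triangle
      nlinarith [mul_le_mul_of_nonneg_left htri (hc w)]
    · simp only [not_exists, not_not] at h
      rw [(hG u w).dist_eq_add_of_forall_mem_support h, dist_comm (u := u)]
      exact le_of_eq (by push_cast; ring)
  rw [branchWeight_connectedComponentMk]
  calc _ = ∑ w, (c w * G.dist v w + G.dist v u
        * (c w - 2 * if ∃ p : G.Walk u w, v ∉ p.support then c w else 0)) := by
        simp only [weightedDist, mul_sub, mul_sum, sum_add_distrib, sum_sub_distrib]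
    _ ≤ G.weightedDist c u := sum_le_sum fun w _ => key w

end SimpleGraph

theorem median_iff_branch_weight {V : Type*} [Fintype V]
    (T : SimpleGraph V) (hT : T.IsTree) (c : V → ℝ) (hc : ∀ v, 0 ≤ c v) (v : V) :
    (∀ u : V, (∑ w, c w * T.dist v w) ≤ ∑ w, c w * T.dist u w) ↔
    (∀ K : (SimpleGraph.induce ({v}ᶜ : Set V) T).ConnectedComponent,
        (∑ w, if ∃ hw : w ∈ ({v}ᶜ : Set V),
            (SimpleGraph.induce ({v}ᶜ : Set V) T).connectedComponentMk ⟨w, hw⟩ = K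
          then c w else 0)
          ≤ (∑ w, c w) / 2) := by
  show (∀ u, T.weightedDist c v ≤ T.weightedDist c u) ↔ ∀ K, T.branchWeight c K ≤ (∑ w, c w) / 2
  constructor
  · intro hmin K
    obtain ⟨u, hu, rfl⟩ := hT.connected.exists_adj_connectedComponentMk_eq K
    linarith [hT.weightedDist_of_adj c hu, hmin u]
  · intro hbw u
    by_cases huv : u = v
    · rw [huv]
    have hK := hbw ((T.induce {v}ᶜ).connectedComponentMk ⟨u, huv⟩)
    refine le_trans ?_ (hT.connected.weightedDist_add_dist_mul_le hc huv)
    exact le_add_of_nonneg_right (mul_nonneg (Nat.cast_nonneg _) (by linarith))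
end

section
/- Let G be a connected graph, and let k, L be reals with 0 < k < L. Let c be a nonnegative vertex weight function with total weight N such that every vertex has weight at least k, some vertex has weight at least L, and N − L is an integer multiple of k. If v is a c-median vertex of G and L > N/2, then σ_c(v,G) ≤ (N−L)(N−L+k)/(2k). -/
open Finset

/-- In a connected graph, every value up to `dist u w` is attained as an exact distance. -/
lemma exists_dist_eq_aux {V : Type*} (G : SimpleGraph V) (hG : G.Connected) (u : V) :
    ∀ (d : ℕ) (w : V), G.dist u w = d → ∀ i ≤ d, ∃ x, G.dist u x = i := by
  intro d
  induction d with
  | zero =>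
    intro w _ i hi
    interval_cases i
    exact ⟨u, SimpleGraph.dist_self⟩
  | succ d ih =>
    intro w hw i hi
    rcases eq_or_lt_of_le hi with h | h
    · exact ⟨w, h ▸ hw⟩
    · obtain ⟨q, hq⟩ := (hG w u).exists_walk_length_eq_dist
      cases q with
      | nil =>
        rw [SimpleGraph.Walk.length_nil, SimpleGraph.dist_comm] at hq
        omega
      | @cons _ x _ hadj r =>
        have h1 : G.dist u x ≤ d := by
          have h2 := SimpleGraph.dist_le r
          rw [SimpleGraph.dist_comm] at h2
          rw [SimpleGraph.Walk.length_cons, SimpleGraph.dist_comm, hw] at hq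
          omega
        have h2 : d ≤ G.dist u x := by
          have htr := hG.dist_triangle (u := u) (v := x) (w := w)
          have hxw : G.dist x w = 1 := SimpleGraph.dist_eq_one_iff_adj.mpr hadj.symm
          omega
        exact ih x (le_antisymm h1 h2) i (by omega)

lemma sum_sub_le_gauss (n D : ℕ) : (∑ j ∈ range D, (n - j)) * 2 ≤ n * (n + 1) := by
  have h1 : (∑ j ∈ range D, (n - j)) ≤ ∑ j ∈ range (n + 1), (n - j) := by
    rcases le_total D (n + 1) with h | h
    · exact Finset.sum_le_sum_of_subset (Finset.range_subset_range.mpr h)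
    · refine le_of_eq (Finset.sum_subset (Finset.range_subset_range.mpr h) ?_).symm
      intro j hj hj2
      simp only [Finset.mem_range] at hj hj2
      omega
  have h2 : ∑ j ∈ range (n + 1), (n - j) = ∑ j ∈ range (n + 1), j := by
    have := Finset.sum_range_reflect (fun j => j) (n + 1)
    simpa using this
  have h3 := Finset.sum_range_id_mul_two (n + 1)
  calc (∑ j ∈ range D, (n - j)) * 2 ≤ (∑ j ∈ range (n + 1), j) * 2 := by
        rw [← h2]; exact Nat.mul_le_mul_right 2 h1
    _ = (n + 1) * n := h3
    _ = n * (n + 1) := Nat.mul_comm _ _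

theorem weighted_median_bound_large_L {V : Type*} [Fintype V]
    (G : SimpleGraph V) (hG : G.Connected)
    (k L : ℝ) (hk : 0 < k) (hkL : k < L)
    (c : V → ℝ) (hc : ∀ v, 0 ≤ c v)
    (N : ℝ) (hN : N = ∑ u, c u)
    (hck : ∀ u, k ≤ c u) (hcL : ∃ u, L ≤ c u)
    (hmul : ∃ m : ℤ, N - L = m * k)
    (v : V) (hmed : ∀ u : V, (∑ w, c w * G.dist v w) ≤ ∑ w, c w * G.dist u w)
    (hL : N / 2 < L) :
    (∑ w, c w * G.dist v w) ≤ (N - L) * (N - L + k) / (2 * k) := by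
  classical
  obtain ⟨u₀, hu₀⟩ := hcL
  obtain ⟨m, hm⟩ := hmul
  set D := Fintype.card V with hD
  have hdistlt : ∀ w : V, G.dist u₀ w < D := by
    intro w
    obtain ⟨p, hp, hlen⟩ := hG.exists_path_of_dist u₀ w
    exact hlen ▸ hp.length_lt
  -- N - L ≥ 0 and m ≥ 0
  have hcN : c u₀ ≤ N := by
    rw [hN]
    exact Finset.single_le_sum (fun i _ => hc i) (Finset.mem_univ u₀)
  have hNL : 0 ≤ N - L := by linarith
  have hm0 : 0 ≤ m := by
    by_contra hneg
    push_neg at hneg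
    have : (m : ℝ) * k < 0 := by
      apply mul_neg_of_neg_of_pos _ hk
      exact_mod_cast hneg
    linarith
  set n := m.toNat with hn
  have hnk : (n : ℝ) * k = N - L := by
    rw [hn, hm]
    congr 1
    exact_mod_cast Int.toNat_of_nonneg hm0
  -- the weight above level j
  set W : ℕ → ℝ := fun j => ∑ w ∈ univ.filter (fun w => j < G.dist u₀ w), c w with hW
  -- layer cake
  have hA : (∑ w, c w * G.dist u₀ w) = ∑ j ∈ range D, W j := by
    have key : ∀ w : V, c w * (G.dist u₀ w : ℝ)
        = ∑ j ∈ range D, if j < G.dist u₀ w then c w else 0 := by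
      intro w
      rw [Finset.sum_ite, Finset.sum_const_zero, add_zero, Finset.sum_const]
      have hfe : (range D).filter (fun j => j < G.dist u₀ w) = range (G.dist u₀ w) := by
        ext j
        simp only [Finset.mem_filter, Finset.mem_range]
        have := hdistlt w
        omega
      rw [hfe, Finset.card_range, nsmul_eq_mul, mul_comm]
    calc (∑ w, c w * G.dist u₀ w)
        = ∑ w, ∑ j ∈ range D, if j < G.dist u₀ w then c w else 0 := by
          exact Finset.sum_congr rfl fun w _ => key w
      _ = ∑ j ∈ range D, ∑ w, if j < G.dist u₀ w then c w else 0 := Finset.sum_comm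
      _ = ∑ j ∈ range D, W j := by
          refine Finset.sum_congr rfl fun j _ => ?_
          rw [hW]
          exact (Finset.sum_filter _ _).symm
  -- key bound on levels
  have hB : ∀ j ∈ range D, W j ≤ k * ((n - j : ℕ) : ℝ) := by
    intro j _
    rcases (univ.filter (fun w => j < G.dist u₀ w)).eq_empty_or_nonempty with he | hne
    · rw [hW]
      simp only [he, Finset.sum_empty]
      positivity
    · obtain ⟨w, hwmem⟩ := hne
      have hjw : j < G.dist u₀ w := (Finset.mem_filter.mp hwmem).2
      have hex : ∀ i : ℕ, ∃ x, i ≤ j → G.dist u₀ x = i := by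
        intro i
        by_cases h : i ≤ j
        · obtain ⟨x, hx⟩ := exists_dist_eq_aux G hG u₀ (G.dist u₀ w) w rfl i (by omega)
          exact ⟨x, fun _ => hx⟩
        · exact ⟨u₀, fun h' => absurd h' h⟩
      choose x hx using hex
      set A : Finset V := (range (j + 1)).image x with hA'
      have hxd : ∀ i ∈ range (j + 1), G.dist u₀ (x i) = i := by
        intro i hi
        exact hx i (by simpa [Nat.lt_succ_iff] using hi)
      have hsumA : L + j * k ≤ ∑ w ∈ A, c w := by
        rw [hA', Finset.sum_image (by
          intro a ha b hb hab
          have h1 := hxd a ha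
          have h2 := hxd b hb
          rw [hab] at h1
          omega)]
        rw [Finset.sum_range_succ']
        have hx0 : x 0 = u₀ := by
          have h0 := hxd 0 (Finset.mem_range.mpr (Nat.succ_pos j))
          exact (hG.dist_eq_zero_iff.mp h0).symm
        have hL0 : L ≤ c (x 0) := by rw [hx0]; exact hu₀
        have hrest : (j : ℝ) * k ≤ ∑ i ∈ range j, c (x (i + 1)) := by
          calc (j : ℝ) * k = ∑ _i ∈ range j, k := by
                rw [Finset.sum_const, Finset.card_range, nsmul_eq_mul]
            _ ≤ ∑ i ∈ range j, c (x (i + 1)) := Finset.sum_le_sum fun i _ => hck _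
        linarith
      have hsub : univ.filter (fun w => j < G.dist u₀ w) ⊆ univ \ A := by
        intro y hy
        have hjy : j < G.dist u₀ y := (Finset.mem_filter.mp hy).2
        rw [Finset.mem_sdiff]
        refine ⟨Finset.mem_univ _, ?_⟩
        intro hyA
        rw [hA', Finset.mem_image] at hyA
        obtain ⟨i, hi, hiy⟩ := hyA
        have := hxd i hi
        rw [hiy] at this
        rw [Finset.mem_range] at hi
        omega
      have hWle : W j ≤ N - (L + j * k) := by
        have h1 : W j ≤ ∑ w ∈ univ \ A, c w :=
          Finset.sum_le_sum_of_subset_of_nonneg hsub fun i _ _ => hc i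
        have h2 : ∑ w ∈ univ \ A, c w = N - ∑ w ∈ A, c w := by
          rw [Finset.sum_sdiff_eq_sub (Finset.subset_univ A), hN]
        linarith
      -- conclude: N - (L + j k) ≤ k (n - j)
      rcases le_or_gt j n with hcase | hcase
      · have : ((n - j : ℕ) : ℝ) = (n : ℝ) - j := by
          push_cast [Nat.cast_sub hcase]
          ring
        rw [this]
        have : N - L = (n : ℝ) * k := hnk.symm
        nlinarith
      · have h0 : (n - j : ℕ) = 0 := by omega
        rw [h0]
        have hnj : (n : ℝ) ≤ (j : ℝ) := by exact_mod_cast hcase.le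
        have : (n : ℝ) * k ≤ (j : ℝ) * k := by nlinarith
        simp only [Nat.cast_zero, mul_zero]
        linarith [hnk]
  -- put it together
  have hC : (∑ w, c w * G.dist u₀ w) ≤ k * ((n : ℝ) * (n + 1) / 2) := by
    rw [hA]
    calc ∑ j ∈ range D, W j ≤ ∑ j ∈ range D, k * ((n - j : ℕ) : ℝ) :=
          Finset.sum_le_sum hB
      _ = k * ((∑ j ∈ range D, (n - j) : ℕ) : ℝ) := by
          rw [← Finset.mul_sum]
          push_cast
          ring
      _ ≤ k * ((n : ℝ) * (n + 1) / 2) := by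
          apply mul_le_mul_of_nonneg_left _ hk.le
          have hg := sum_sub_le_gauss n D
          have hg' : ((∑ j ∈ range D, (n - j) : ℕ) : ℝ) * 2 ≤ (n : ℝ) * (n + 1) := by
            exact_mod_cast hg
          linarith
  have hfinal : k * ((n : ℝ) * (n + 1) / 2) = (N - L) * (N - L + k) / (2 * k) := by
    rw [← hnk]
    field_simp
  calc (∑ w, c w * G.dist v w) ≤ ∑ w, c w * G.dist u₀ w := hmed u₀
    _ ≤ k * ((n : ℝ) * (n + 1) / 2) := hC
    _ = (N - L) * (N - L + k) / (2 * k) := hfinal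
end

section
/- Let G be a connected graph, and let k, L be reals with 0 < k < L. Let c be a nonnegative vertex weight function with total weight N such that every vertex has weight at least k, some vertex has weight at least L, and N − L is an integer multiple of k. If v is a c-median vertex of G and L ≤ N/2, then σ_c(v,G) ≤ (N² − 2L²)/(4k) + (N+L)/2. -/
/-!
Assign every vertex `w ≠ v` to a neighbour `q` of `v` on a geodesic from `v` to `w`, choosing the
least such neighbour in a fixed order; then each branch is closed under geodesics from its root
`q`, so all distance levels from `q` up to the branch's radius are occupied. Since `v` is a median,
each branch carries weight `W ≤ N / 2`. With every level of weight at least `k` and one vertex of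
weight at least `Λ`, the branch contributes at most `W + (W (W - k) - Λ (Λ - k)) / (2k)` to
`σ_c(v)`; summing over branches, the heavy vertex either is `v` or sits in one branch.
-/

open Finset

theorem sum_range_mul_le_of_forall_le {k Λ : ℝ} (hk : 0 < k) (hkΛ : k ≤ Λ) {A : ℕ → ℝ}
    {T j : ℕ} (hA : ∀ s ≤ T, k ≤ A s) (hj : j ≤ T) (hΛ : Λ ≤ A j) :
    ∑ s ∈ range (T + 1), s * A s ≤
      ((∑ s ∈ range (T + 1), A s) * ((∑ s ∈ range (T + 1), A s) - k) - Λ * (Λ - k)) /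
        (2 * k) := by
  set W := ∑ s ∈ range (T + 1), A s
  have hgauss : (∑ s ∈ range (T + 1), (s : ℝ)) * 2 = (T + 1) * T := by
    have h := sum_range_id_mul_two (T + 1)
    rw [Nat.add_sub_cancel] at h
    rw [← Nat.cast_sum]
    exact_mod_cast h
  have hmoment : ∑ s ∈ range (T + 1), s * A s ≤ T * W - k * T * (T + 1) / 2 := by
    have : 0 ≤ ∑ s ∈ range (T + 1), ((T : ℝ) - s) * (A s - k) :=
      sum_nonneg fun s hs ↦ mul_nonneg (by simpa using Nat.lt_succ_iff.mp (mem_range.mp hs))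
        (sub_nonneg.mpr (hA s (Nat.lt_succ_iff.mp (mem_range.mp hs))))
    simp only [sub_mul, mul_sub, sum_sub_distrib, ← mul_sum, ← sum_mul, sum_const, card_range,
      nsmul_eq_mul] at this
    push_cast at this
    nlinarith
  have hmass : k * T + Λ ≤ W := by
    have hjT : j ∈ range (T + 1) := mem_range.mpr (Nat.lt_succ_of_le hj)
    have : k * T ≤ ∑ s ∈ (range (T + 1)).erase j, A s := by
      simpa [card_erase_of_mem hjT, mul_comm] using
        card_nsmul_le_sum ((range (T + 1)).erase j) A k fun s hs ↦
          hA s (Nat.lt_succ_iff.mp (mem_range.mp (mem_of_mem_erase hs)))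
    linarith [add_sum_erase _ A hjT]
  rw [le_div_iff₀ (by positivity)]
  nlinarith [mul_nonneg (sub_nonneg.mpr hmass) (by linarith : 0 ≤ W - k * T + Λ - k)]

theorem sum_mul_le_of_levels_closed {ι : Type*} {B : Finset ι} {c : ι → ℝ} {d : ι → ℕ}
    {k Λ : ℝ} (hk : 0 < k) (hkΛ : k ≤ Λ) (hck : ∀ i ∈ B, k ≤ c i)
    (hclosed : ∀ i ∈ B, ∀ s ≤ d i, ∃ j ∈ B, d j = s) {z : ι} (hz : z ∈ B)
    (hΛ : Λ ≤ c z) :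
    ∑ i ∈ B, c i * d i ≤
      ((∑ i ∈ B, c i) * ((∑ i ∈ B, c i) - k) - Λ * (Λ - k)) / (2 * k) := by
  classical
  obtain ⟨t, ht, hT⟩ := exists_mem_eq_sup B ⟨z, hz⟩ d
  set T := B.sup d
  set A : ℕ → ℝ := fun s ↦ ∑ i ∈ B with d i = s, c i
  have hmaps : ∀ i ∈ B, d i ∈ range (T + 1) := fun i hi ↦
    mem_range.mpr (Nat.lt_succ_of_le (le_sup hi))
  have hc : ∀ i ∈ B, 0 ≤ c i := fun i hi ↦ hk.le.trans (hck i hi)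
  have hle_level : ∀ i ∈ B, c i ≤ A (d i) := fun i hi ↦
    single_le_sum (fun j hj ↦ hc j (mem_filter.mp hj).1) (mem_filter.mpr ⟨hi, rfl⟩)
  have hA : ∀ s ≤ T, k ≤ A s := by
    intro s hs
    obtain ⟨j, hj, rfl⟩ := hclosed t ht s (hT ▸ hs)
    exact (hck j hj).trans (hle_level j hj)
  have hmass : ∑ s ∈ range (T + 1), A s = ∑ i ∈ B, c i := sum_fiberwise_of_maps_to hmaps c
  have hmoment : ∑ s ∈ range (T + 1), s * A s = ∑ i ∈ B, c i * d i := by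
    rw [← sum_fiberwise_of_maps_to hmaps]
    refine sum_congr rfl fun s _ ↦ ?_
    rw [mul_sum]
    exact sum_congr rfl fun i hi ↦ by rw [(mem_filter.mp hi).2, mul_comm]
  rw [← hmass, ← hmoment]
  exact sum_range_mul_le_of_forall_le hk hkΛ hA (le_sup hz) (hΛ.trans (hle_level z hz))

namespace SimpleGraph

variable {V : Type*} {G : SimpleGraph V}

theorem Connected.exists_dist_eq_and_dist_eq_sub (hG : G.Connected) {u w : V} {s : ℕ}
    (hs : s ≤ G.dist u w) : ∃ y, G.dist u y = s ∧ G.dist y w = G.dist u w - s := by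
  obtain ⟨p, hp⟩ := hG.exists_walk_length_eq_dist u w
  have htake := dist_le (p.take s)
  have hdrop := dist_le (p.drop s)
  have := hG.dist_triangle (u := u) (v := p.getVert s) (w := w)
  simp only [Walk.take_length, Walk.drop_length] at htake hdrop
  exact ⟨p.getVert s, by omega, by omega⟩

theorem Connected.dist_eq_add_one_of_adj_of_lt (hG : G.Connected) {v q w : V} (hadj : G.Adj v q)
    (h : G.dist q w < G.dist v w) : G.dist v w = G.dist q w + 1 := by
  have := hG.dist_triangle (u := v) (v := q) (w := w)
  rw [dist_eq_one_iff_adj.mpr hadj] at this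
  omega

theorem Connected.exists_branch_root [Fintype V] (hG : G.Connected) (v : V) :
    ∃ r : V → V, ∀ w ≠ v, G.Adj v (r w) ∧ G.dist v w = G.dist (r w) w + 1 ∧
      ∀ s ≤ G.dist (r w) w, ∃ y ≠ v, r y = r w ∧ G.dist (r w) y = s := by
  classical
  let _ : LinearOrder V := LinearOrder.lift' _ (Fintype.equivFin V).injective
  let F : V → Finset V := fun w ↦ {q | G.Adj v q ∧ G.dist q w < G.dist v w}
  have hF : ∀ w ≠ v, (F w).Nonempty := by
    intro w hw
    obtain ⟨q, hq, hqw⟩ := hG.exists_dist_eq_and_dist_eq_sub (hG.pos_dist_of_ne hw.symm)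
    exact ⟨q, by simp [F, dist_eq_one_iff_adj.mp hq, hqw, hG.pos_dist_of_ne hw.symm]⟩
  let r : V → V := fun w ↦ if h : (F w).Nonempty then (F w).min' h else w
  have hr : ∀ w (h : (F w).Nonempty), r w = (F w).min' h := fun w h ↦ dif_pos h
  refine ⟨r, fun w hw ↦ ?_⟩
  have hrw : G.Adj v (r w) ∧ G.dist (r w) w < G.dist v w := by
    simpa [F, hr w (hF w hw)] using (F w).min'_mem (hF w hw)
  refine ⟨hrw.1, hG.dist_eq_add_one_of_adj_of_lt hrw.1 hrw.2, fun s hs ↦ ?_⟩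
  obtain ⟨y, hy, hyw⟩ := hG.exists_dist_eq_and_dist_eq_sub hs
  have hvy : G.dist v y = s + 1 := by
    have := hG.dist_triangle (u := v) (v := r w) (w := y)
    have := hG.dist_triangle (u := v) (v := y) (w := w)
    rw [dist_eq_one_iff_adj.mpr hrw.1] at *
    omega
  -- The root of `w` lies in `F y ⊆ F w`, so it is also the least element of `F y`.
  have hmem : r w ∈ F y := by simp [F, hrw.1, hy, hvy]
  have hsub : F y ⊆ F w := by
    intro q hq
    simp only [F, mem_filter, mem_univ, true_and] at hq ⊢
    have := hG.dist_triangle (u := q) (v := y) (w := w)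
    exact ⟨hq.1, by omega⟩
  refine ⟨y, fun h ↦ by simp [h] at hvy, ?_, hy⟩
  rw [hr y ⟨_, hmem⟩]
  exact le_antisymm (min'_le _ _ hmem) ((hr w (hF w hw)).trans_le (min'_subset _ hsub))

theorem Connected.two_mul_sum_dist_lt_le_of_median [Fintype V] (hG : G.Connected) {c : V → ℝ}
    (hc : ∀ w, 0 ≤ c w) {v q : V} (hadj : G.Adj v q)
    (hmed : ∑ w, c w * G.dist v w ≤ ∑ w, c w * G.dist q w) :
    2 * ∑ w with G.dist q w < G.dist v w, c w ≤ ∑ w, c w := by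
  classical
  have hpointwise : ∀ w, c w * G.dist q w ≤
      c w * G.dist v w + c w - 2 * if G.dist q w < G.dist v w then c w else 0 := by
    intro w
    split_ifs with h
    · rw [hG.dist_eq_add_one_of_adj_of_lt hadj h]
      push_cast
      linarith
    · have := hG.dist_triangle (u := q) (v := v) (w := w)
      rw [dist_eq_one_iff_adj.mpr hadj.symm] at this
      have : (G.dist q w : ℝ) ≤ G.dist v w + 1 := by exact_mod_cast this.trans_eq (add_comm _ _)
      nlinarith [hc w]
  have := sum_le_sum fun w (_ : w ∈ univ) ↦ hpointwise w
  rw [sum_sub_distrib, sum_add_distrib, ← mul_sum, ← sum_filter] at this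
  linarith

theorem sum_mul_dist_add_le_of_branch [DecidableEq V] {B : Finset V} {c : V → ℝ} {k Λ N : ℝ}
    {v q u : V} (hk : 0 < k) (hkΛ : k ≤ Λ) (hck : ∀ w ∈ B, k ≤ c w)
    (hB : ∀ w ∈ B, G.dist v w = G.dist q w + 1)
    (hclosed : ∀ w ∈ B, ∀ s ≤ G.dist q w, ∃ y ∈ B, G.dist q y = s)
    (hmass : 2 * ∑ w ∈ B, c w ≤ N) (hΛ : Λ ≤ c u) :
    ∑ w ∈ B, (c w * G.dist v w + if w = u then Λ * (Λ - k) / (2 * k) else 0) ≤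
      ∑ w ∈ B, c w * ((N + 2 * k) / (4 * k)) := by
  rcases B.eq_empty_or_nonempty with rfl | ⟨z, hz⟩
  · simp
  set W := ∑ w ∈ B, c w
  have hW : 0 ≤ W := sum_nonneg fun w hw ↦ hk.le.trans (hck w hw)
  have hshift : ∑ w ∈ B, c w * G.dist v w = W + ∑ w ∈ B, c w * G.dist q w := by
    rw [sum_congr rfl fun w hw ↦ by rw [hB w hw], ← sum_add_distrib]
    push_cast
    exact sum_congr rfl fun w _ ↦ by ring
  have hbound : ∀ Λ', k ≤ Λ' → (∃ z ∈ B, Λ' ≤ c z) →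
      W + ∑ w ∈ B, c w * G.dist q w + Λ' * (Λ' - k) / (2 * k) ≤
        W * ((N + 2 * k) / (4 * k)) := by
    rintro Λ' hkΛ' ⟨z, hz, hΛ'⟩
    have := sum_mul_le_of_levels_closed hk hkΛ' hck hclosed hz hΛ'
    have hsq : W * (W + k) / (2 * k) ≤ W * ((N + 2 * k) / (4 * k)) := by
      rw [div_le_iff₀ (by positivity)]
      field_simp
      nlinarith
    calc _ ≤ W + (W * (W - k) - Λ' * (Λ' - k)) / (2 * k) + Λ' * (Λ' - k) / (2 * k) := by
          gcongr
      _ = W * (W + k) / (2 * k) := by field_simp; ring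
      _ ≤ _ := hsq
  rw [sum_add_distrib, sum_ite_eq', ← sum_mul, hshift]
  split_ifs with hu
  · exact hbound Λ hkΛ ⟨u, hu, hΛ⟩
  · simpa using hbound k le_rfl ⟨z, hz, hck z hz⟩

theorem Connected.sum_mul_dist_add_le_of_median [Fintype V] [DecidableEq V] (hG : G.Connected)
    {c : V → ℝ} {k Λ : ℝ} {v u : V} (hk : 0 < k) (hkΛ : k ≤ Λ) (hck : ∀ w, k ≤ c w)
    (hmed : ∀ q, ∑ w, c w * G.dist v w ≤ ∑ w, c w * G.dist q w) (hΛ : Λ ≤ c u) :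
    ∑ w ∈ univ.erase v, (c w * G.dist v w + if w = u then Λ * (Λ - k) / (2 * k) else 0) ≤
      ∑ w ∈ univ.erase v, c w * ((∑ w, c w + 2 * k) / (4 * k)) := by
  obtain ⟨r, hr⟩ := hG.exists_branch_root v
  rw [← sum_fiberwise (univ.erase v) r, ← sum_fiberwise (univ.erase v) r]
  refine sum_le_sum fun q _ ↦ sum_mul_dist_add_le_of_branch (q := q) hk hkΛ (fun w _ ↦ hck w)
    ?_ ?_ ?_ hΛ
  · intro w hw
    simp only [mem_filter, mem_erase] at hw
    exact hw.2 ▸ (hr w hw.1.1).2.1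
  · intro w hw s hs
    simp only [mem_filter, mem_erase] at hw
    obtain ⟨y, hyv, hyr, hy⟩ := (hr w hw.1.1).2.2 s (hw.2 ▸ hs)
    exact ⟨y, by simp [hyv, hyr, hw.2], hw.2 ▸ hy⟩
  · rcases eq_empty_or_nonempty {w ∈ univ.erase v | r w = q} with hB | ⟨w, hw⟩
    · simpa [hB] using sum_nonneg fun w _ ↦ hk.le.trans (hck w)
    simp only [mem_filter, mem_erase] at hw
    have hadj : G.Adj v q := hw.2 ▸ (hr w hw.1.1).1
    refine le_trans ?_ (hG.two_mul_sum_dist_lt_le_of_median (fun w ↦ hk.le.trans (hck w))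
      hadj (hmed q))
    gcongr 2 * ?_
    refine sum_le_sum_of_subset_of_nonneg (fun x hx ↦ ?_) fun x _ _ ↦ hk.le.trans (hck x)
    simp only [mem_filter, mem_erase] at hx
    have := (hr x hx.1.1).2.1
    rw [hx.2] at this
    simp [this]

end SimpleGraph

theorem weighted_median_bound_small_L_general {V : Type*} [Fintype V]
    (G : SimpleGraph V) (hG : G.Connected)
    (k L : ℝ) (hk : 0 < k) (hkL : k < L)
    (c : V → ℝ)
    (N : ℝ) (hN : N = ∑ u, c u)
    (hck : ∀ u, k ≤ c u) (hcL : ∃ u, L ≤ c u)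
    (v : V) (hmed : ∀ u : V, (∑ w, c w * G.dist v w) ≤ ∑ w, c w * G.dist u w)
    (hL : L ≤ N / 2) :
    (∑ w, c w * G.dist v w) ≤ (N ^ 2 - 2 * L ^ 2) / (4 * k) + (N + L) / 2 := by
  classical
  obtain ⟨u, hu⟩ := hcL
  have h := hG.sum_mul_dist_add_le_of_median hk hkL.le hck hmed hu
  rw [sum_add_distrib, sum_ite_eq', ← sum_mul, sum_erase_eq_sub (f := c) (mem_univ v),
    sum_erase (f := fun w ↦ c w * (G.dist v w : ℝ)) univ (by simp), ← hN] at h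
  have hN0 : 0 ≤ N := by linarith
  by_cases huv : u = v
  · subst huv
    simp only [mem_erase, ne_eq, not_true_eq_false, false_and, if_false, add_zero] at h
    calc _ ≤ (N - c u) * ((N + 2 * k) / (4 * k)) := h
      _ ≤ (N - L) * ((N + 2 * k) / (4 * k)) := by gcongr
      _ ≤ _ := by
        rw [← sub_nonneg]
        have : (N ^ 2 - 2 * L ^ 2) / (4 * k) + (N + L) / 2 - (N - L) * ((N + 2 * k) / (4 * k)) =
            L * (N - 2 * L + 4 * k) / (4 * k) := by field_simp; ring
        rw [this]
        exact div_nonneg (mul_nonneg (by linarith) (by linarith)) (by positivity)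
  · simp only [mem_erase, ne_eq, huv, not_false_eq_true, mem_univ, and_true, if_true] at h
    calc _ ≤ (N - c v) * ((N + 2 * k) / (4 * k)) - L * (L - k) / (2 * k) := by linarith
      _ ≤ (N - k) * ((N + 2 * k) / (4 * k)) - L * (L - k) / (2 * k) := by gcongr; exact hck v
      _ ≤ _ := by
        rw [← sub_nonneg]
        have : (N ^ 2 - 2 * L ^ 2) / (4 * k) + (N + L) / 2 -
            ((N - k) * ((N + 2 * k) / (4 * k)) - L * (L - k) / (2 * k)) = (N + 2 * k) / 4 := by
          field_simp; ring
        rw [this]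
        linarith

theorem weighted_median_bound_small_L {V : Type*} [Fintype V]
    (G : SimpleGraph V) (hG : G.Connected)
    (k L : ℝ) (hk : 0 < k) (hkL : k < L)
    (c : V → ℝ) (hc : ∀ v, 0 ≤ c v)
    (N : ℝ) (hN : N = ∑ u, c u)
    (hck : ∀ u, k ≤ c u) (hcL : ∃ u, L ≤ c u)
    (hmul : ∃ m : ℤ, N - L = m * k)
    (v : V) (hmed : ∀ u : V, (∑ w, c w * G.dist v w) ≤ ∑ w, c w * G.dist u w)
    (hL : L ≤ N / 2) :
    (∑ w, c w * G.dist v w) ≤ (N ^ 2 - 2 * L ^ 2) / (4 * k) + (N + L) / 2 :=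
  weighted_median_bound_small_L_general G hG k L hk hkL c N hN hck hcL v hmed hL
end

section
/- Let G be a connected graph, and let k, L be reals with 0 < k < L. Let c be a nonnegative vertex weight function with total weight N such that every vertex has weight at least k, some vertex has weight at least L, and N − L is an integer multiple of k. Then for every vertex v of G, σ_c(v,G) ≤ (N−L)(N+L−k)/(2k). -/
open Finset

lemma walk_split {V : Type*} {G : SimpleGraph V} {u w : V} (p : G.Walk u w) :
    ∀ j, j ≤ p.length → ∃ (q : G.Walk u (p.getVert j)) (r : G.Walk (p.getVert j) w),
      q.length = j ∧ r.length = p.length - j := by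
  induction p with
  | nil =>
    intro j hj
    simp only [SimpleGraph.Walk.length_nil, Nat.le_zero] at hj
    subst hj
    exact ⟨SimpleGraph.Walk.nil.copy rfl (SimpleGraph.Walk.getVert_zero _).symm,
      SimpleGraph.Walk.nil.copy (SimpleGraph.Walk.getVert_zero _).symm rfl, by simp, by simp⟩
  | cons h' q ih =>
    intro j hj
    match j with
    | 0 =>
      exact ⟨SimpleGraph.Walk.nil.copy rfl (SimpleGraph.Walk.getVert_zero _).symm,
        (SimpleGraph.Walk.cons h' q).copy (SimpleGraph.Walk.getVert_zero _).symm rfl,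
        by simp, by simp⟩
    | n+1 =>
      obtain ⟨qq, rr, h1, h2⟩ := ih n (by simpa using hj)
      refine ⟨(qq.cons h').copy rfl (SimpleGraph.Walk.getVert_cons_succ _ _).symm,
        rr.copy (SimpleGraph.Walk.getVert_cons_succ _ _).symm rfl, by simp [h1], ?_⟩
      simp only [SimpleGraph.Walk.length_copy, SimpleGraph.Walk.length_cons, h2]
      omega

lemma gauss_sum_real (n : ℕ) : ∑ j ∈ Icc 1 n, (j : ℝ) = n * (n + 1) / 2 := by
  induction n with
  | zero => simp
  | succ n ih =>
    rw [Finset.sum_Icc_succ_top (by omega : 1 ≤ n + 1), ih]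
    push_cast
    ring

theorem weighted_remoteness_bound {V : Type*} [Fintype V]
    (G : SimpleGraph V) (hG : G.Connected)
    (k L : ℝ) (hk : 0 < k) (hkL : k < L)
    (c : V → ℝ) (hc : ∀ v, 0 ≤ c v)
    (N : ℝ) (hN : N = ∑ u, c u)
    (hck : ∀ u, k ≤ c u) (hcL : ∃ u, L ≤ c u)
    (hmul : ∃ m : ℤ, N - L = m * k) (v : V) :
    (∑ w, c w * G.dist v w) ≤ (N - L) * (N + L - k) / (2 * k) := by
  classical
  set e : ℕ := univ.sup (fun w => G.dist v w) with he_def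
  have hdle : ∀ w, G.dist v w ≤ e := fun w => le_sup (mem_univ w)
  obtain ⟨w0, -, hw0⟩ := Finset.exists_mem_eq_sup univ ⟨v, mem_univ v⟩ (fun w => G.dist v w)
  -- for each j ≤ e there is a vertex at distance exactly j
  have hexists : ∀ j : ℕ, ∃ u, j ≤ e → G.dist v u = j := by
    intro j
    by_cases hj : j ≤ e
    · obtain ⟨p, hp⟩ := hG.exists_walk_length_eq_dist v w0
      obtain ⟨q, r, hq, hr⟩ := walk_split p j (by omega)
      refine ⟨p.getVert j, fun _ => le_antisymm (le_trans (SimpleGraph.dist_le q) hq.le) ?_⟩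
      have h1 := hG.dist_triangle (u := v) (v := p.getVert j) (w := w0)
      have h2 := SimpleGraph.dist_le r
      omega
    · exact ⟨v, fun h => absurd h hj⟩
  choose g hg using hexists
  have hginj : ∀ i1, i1 ≤ e → ∀ i2, i2 ≤ e → g i1 = g i2 → i1 = i2 := by
    intro i1 h1 i2 h2 hgg
    have d1 := hg i1 h1
    have d2 := hg i2 h2
    rw [hgg] at d1
    omega
  -- Step A: rewrite the weighted sum as a sum over levels
  have hA : ∀ w, c w * (G.dist v w : ℝ) = ∑ j ∈ Icc 1 e, if j ≤ G.dist v w then c w else 0 := by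
    intro w
    rw [← Finset.sum_filter]
    have hfil : (Icc 1 e).filter (fun j => j ≤ G.dist v w) = Icc 1 (G.dist v w) := by
      ext j
      simp only [mem_filter, mem_Icc]
      have := hdle w
      omega
    rw [hfil, Finset.sum_const, Nat.card_Icc, nsmul_eq_mul]
    push_cast
    ring
  have hswap : (∑ w, c w * (G.dist v w : ℝ))
      = ∑ j ∈ Icc 1 e, ∑ w ∈ univ.filter (fun w => j ≤ G.dist v w), c w := by
    calc (∑ w, c w * (G.dist v w : ℝ))
        = ∑ w, ∑ j ∈ Icc 1 e, if j ≤ G.dist v w then c w else 0 :=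
          Finset.sum_congr rfl fun w _ => hA w
      _ = ∑ j ∈ Icc 1 e, ∑ w, if j ≤ G.dist v w then c w else 0 := Finset.sum_comm
      _ = _ := Finset.sum_congr rfl fun j _ => (Finset.sum_filter _ _).symm
  -- Step B: bound each level sum
  have hB : ∀ j ∈ Icc 1 e, ∑ w ∈ univ.filter (fun w => j ≤ G.dist v w), c w ≤ N - k * j := by
    intro j hj
    rw [mem_Icc] at hj
    set A : Finset V := univ.filter (fun w => j ≤ G.dist v w) with hA_def
    have hsplit : ∑ w ∈ A, c w + ∑ w ∈ Aᶜ, c w = N := by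
      rw [hN]; exact Finset.sum_add_sum_compl A c
    have hTsub : (range j).image g ⊆ Aᶜ := by
      intro x hx
      simp only [mem_image, mem_range] at hx
      obtain ⟨i, hi, rfl⟩ := hx
      have := hg i (by omega)
      simp only [hA_def, mem_compl, mem_filter, mem_univ, true_and, not_le]
      omega
    have hcard : ((range j).image g).card = j := by
      rw [Finset.card_image_of_injOn, card_range]
      intro i1 h1 i2 h2 hgg
      exact hginj i1 (by simp only [coe_range, Set.mem_Iio] at h1; omega)
        i2 (by simp only [coe_range, Set.mem_Iio] at h2; omega) hgg
    have h1 : k * j ≤ ∑ w ∈ Aᶜ, c w := by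
      calc k * j = ((range j).image g).card • k := by rw [hcard, nsmul_eq_mul, mul_comm]
        _ ≤ ∑ w ∈ (range j).image g, c w :=
            Finset.card_nsmul_le_sum _ _ _ (fun w _ => hck w)
        _ ≤ ∑ w ∈ Aᶜ, c w :=
            Finset.sum_le_sum_of_subset_of_nonneg hTsub (fun w _ _ => hc w)
    linarith
  -- Step D: e ≤ m
  obtain ⟨u0, hu0⟩ := hcL
  set W : Finset V := (range (e + 1)).image g with hW_def
  have hWcard : W.card = e + 1 := by
    rw [hW_def, Finset.card_image_of_injOn, card_range]
    intro i1 h1 i2 h2 hgg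
    exact hginj i1 (by simp only [coe_range, Set.mem_Iio] at h1; omega)
      i2 (by simp only [coe_range, Set.mem_Iio] at h2; omega) hgg
  have hsumW : ∀ s : Finset V, ∑ w ∈ s, c w ≤ N := fun s =>
    hN ▸ Finset.sum_le_sum_of_subset_of_nonneg (subset_univ s) (fun w _ _ => hc w)
  have hsc : ∀ s : Finset V, (s.card : ℝ) * k ≤ ∑ w ∈ s, c w := fun s => by
    calc (s.card : ℝ) * k = s.card • k := (nsmul_eq_mul _ _).symm
      _ ≤ ∑ w ∈ s, c w := Finset.card_nsmul_le_sum _ _ _ (fun w _ => hck w)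
  have hNL : L + e * k ≤ N := by
    by_cases hmem : u0 ∈ W
    · have h1 : c u0 + ∑ w ∈ W.erase u0, c w = ∑ w ∈ W, c w :=
        Finset.add_sum_erase _ _ hmem
      have h2 := hsc (W.erase u0)
      have h3 : (W.erase u0).card = e := by
        rw [card_erase_of_mem hmem, hWcard]
        omega
      rw [h3] at h2
      have := hsumW W
      linarith
    · have h1 : c u0 + ∑ w ∈ W, c w = ∑ w ∈ insert u0 W, c w :=
        (Finset.sum_insert hmem).symm
      have h2 := hsc W
      rw [hWcard] at h2
      have := hsumW (insert u0 W)
      have hek : (e : ℝ) * k ≤ ((e : ℕ) + 1 : ℝ) * k := by nlinarith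
      push_cast at h2
      linarith
  obtain ⟨m, hm⟩ := hmul
  have hem : (e : ℝ) ≤ (m : ℝ) := by
    have h1 : (e : ℝ) * k ≤ (m : ℝ) * k := by linarith
    exact le_of_mul_le_mul_right h1 hk
  -- Step C: put it together
  have hσ : (∑ w, c w * (G.dist v w : ℝ)) ≤ ∑ j ∈ Icc 1 e, (N - k * j) := by
    rw [hswap]; exact Finset.sum_le_sum hB
  have hsum : ∑ j ∈ Icc 1 e, (N - k * (j : ℝ)) = e * N - k * (e * (e + 1) / 2) := by
    rw [Finset.sum_sub_distrib, Finset.sum_const, ← Finset.mul_sum, gauss_sum_real,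
      Nat.card_Icc, nsmul_eq_mul]
    push_cast
    ring
  rw [hsum] at hσ
  refine hσ.trans ?_
  have hNsub : N = (m : ℝ) * k + L := by linarith
  rw [le_div_iff₀ (by linarith : (0:ℝ) < 2 * k), hNsub]
  have h1 : (0:ℝ) ≤ (m : ℝ) - e := by linarith
  have h2 : (0:ℝ) ≤ k * ((m : ℝ) - e) + 2 * L - k := by nlinarith [mul_nonneg hk.le h1]
  nlinarith [mul_nonneg (mul_nonneg hk.le h1) h2]
end

section
/- Let G be a connected graph of order n, minimum degree δ and maximum degree Δ. Then the remoteness satisfies ρ(G) ≤ 3(n² − Δ²)/(2(n−1)(δ+1)) + 7. -/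
open Finset

set_option maxHeartbeats 1600000


private lemma floorSum : ∀ e : ℕ, e^2 ≤ 6 * (∑ j ∈ range e, j/3) + 3*e := by
  have key : ∀ m, (m:ℕ)/3 + (m+1)/3 + (m+2)/3 = m := by intro m; omega
  intro e
  induction e using Nat.strong_induction_on with
  | _ e ih =>
    match e with
    | 0 => simp
    | 1 => simp
    | 2 => rw [Finset.sum_range_succ, Finset.sum_range_succ]; norm_num
    | (m+3) =>
      have h1 := ih m (by omega)
      rw [Finset.sum_range_succ, Finset.sum_range_succ, Finset.sum_range_succ]
      have h2 := key m
      nlinarith [h1, h2]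

private lemma swapSum (N : ℕ → ℕ) (e : ℕ) :
    ∑ i ∈ range (e+1), i * N i = ∑ j ∈ range e, ∑ i ∈ Finset.Ioc j e, N i := by
  have h1 : ∀ j ∈ range e, ∑ i ∈ Finset.Ioc j e, N i
      = ∑ i ∈ range (e+1), if j < i then N i else 0 := by
    intro j hj
    rw [Finset.sum_ite, Finset.sum_const_zero, add_zero]
    congr 1
    ext x
    simp only [Finset.mem_filter, Finset.mem_range, Finset.mem_Ioc]
    omega
  rw [Finset.sum_congr rfl h1, Finset.sum_comm]
  refine Finset.sum_congr rfl ?_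
  intro i hi
  simp only [Finset.mem_range] at hi
  rw [Finset.sum_ite, Finset.sum_const_zero, add_zero, Finset.sum_const]
  have : Finset.filter (fun x => x < i) (range e) = range i := by
    ext x; simp only [Finset.mem_filter, Finset.mem_range]; omega
  rw [this, Finset.card_range, smul_eq_mul]

private lemma blockSum {N : ℕ → ℕ} {k e : ℕ}
    (htrip : ∀ c, c+2 ≤ e → k ≤ N c + N (c+1) + N (c+2)) :
    ∀ (t s : ℕ), s + 3*t ≤ e + 1 → k * t ≤ ∑ i ∈ Finset.Ico s (s + 3*t), N i := by
  intro t
  induction t with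
  | zero => simp
  | succ t ih =>
    intro s hs
    have h1 : k ≤ N s + N (s+1) + N (s+2) := htrip s (by omega)
    have h2 : k * t ≤ ∑ i ∈ Finset.Ico (s+3) (s + 3*(t+1)), N i := by
      rw [show s + 3*(t+1) = s + 3 + 3*t by ring]
      exact ih (s+3) (by omega)
    have hsplit : ∑ i ∈ Finset.Ico s (s+3), N i + ∑ i ∈ Finset.Ico (s+3) (s + 3*(t+1)), N i
        = ∑ i ∈ Finset.Ico s (s + 3*(t+1)), N i :=
      Finset.sum_Ico_consecutive _ (by omega) (by omega)
    have h3 : ∑ i ∈ Finset.Ico s (s+3), N i = N s + N (s+1) + N (s+2) := by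
      rw [Finset.sum_Ico_eq_sum_range]
      norm_num [Finset.sum_range_succ, add_assoc]
    rw [← hsplit, h3, mul_add, mul_one]
    omega

private lemma arith (σ n k M p q : ℝ) (hk : 2 ≤ k) (hkM : k ≤ M) (hMn : M ≤ n)
    (hp : 1 ≤ p) (hq : 0 ≤ q) (hpq : p + q ≤ n - 1)
    (hC1 : 6*σ ≤ 6*p*n - k*(p^2-3*p) + 6*q*(n-M) - 2*k*q*(p-4) - k*(q^2-3*q))
    (hC2 : k*(p+q) ≤ 3*(n-M) + 6*k) :
    2*k*σ + 3*(M-1)^2 ≤ 3*n^2 + 14*(n-1)*k := by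
  have hk0 : (0:ℝ) ≤ k := by linarith
  have hq0 : (0:ℝ) ≤ q := hq
  have h1 := mul_le_mul_of_nonneg_left hC1 hk0
  have h1' : 2*k*σ ≤ 2*k*n*(p+q) - (k*(p+q))^2/3 - 2*k*q*M + k^2*p + (11/3)*k^2*q := by
    nlinarith [h1]
  have h2 := mul_le_mul_of_nonneg_left hC2 hk0
  rcases le_or_gt (2*k) M with hcase | hcase
  · have hA : (0:ℝ) ≤ 3*n - k*(p+q) - (3*M - 6*k) := by linarith
    have hB : (0:ℝ) ≤ 3*n - k*(p+q) + (3*M - 6*k) := by linarith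
    nlinarith [h1', h2, mul_nonneg hA hB, mul_nonneg (mul_nonneg hk0 hq0) (by linarith : (0:ℝ) ≤ M - 2*k),
      mul_nonneg hk0 (sub_nonneg.2 hMn), mul_nonneg (by linarith : (0:ℝ) ≤ k-2) hk0]
  · have h3 := mul_le_mul_of_nonneg_left hC2 hq0
    nlinarith [h1', h2, h3, sq_nonneg (k*(p+q) - 3*n),
      mul_nonneg hq0 (sub_nonneg.2 hkM), mul_nonneg hk0 (sub_nonneg.2 hMn),
      mul_le_mul_of_nonneg_left hpq hk0,
      mul_nonneg (by linarith : (0:ℝ) ≤ k-2) (sub_nonneg.2 hMn),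
      mul_nonneg (by linarith : (0:ℝ) ≤ k-2) (sub_nonneg.2 hkM),
      mul_nonneg (mul_nonneg hk0 hq0) (by linarith : (0:ℝ) ≤ 2*k - M)]

private lemma assemble (σ n k M p q c1 c2 Sp Sq : ℕ)
    (hk : 2 ≤ k) (hkM : k ≤ M) (hMn : M ≤ n)
    (H1 : σ + k*Sp + q*M + q*(k*c1) + k*Sq ≤ (p+q)*n)
    (H2 : M + k*c1 + k*c2 ≤ n)
    (H3 : p^2 ≤ 6*Sp + 3*p) (H4 : q^2 ≤ 6*Sq + 3*q)
    (H5 : p ≤ 3*c1 + 4) (H6 : q ≤ 3*c2 + 2)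
    (H7 : p + q + 1 ≤ n) (H8 : 1 ≤ p) :
    2*(k:ℝ)*σ + 3*((M:ℝ)-1)^2 ≤ 3*(n:ℝ)^2 + 14*((n:ℝ)-1)*k := by
  have hk0 : (0:ℝ) ≤ (k:ℝ) := Nat.cast_nonneg k
  have hq0 : (0:ℝ) ≤ (q:ℝ) := Nat.cast_nonneg q
  have h1 : (σ:ℝ) + k*Sp + q*M + q*(k*c1) + k*Sq ≤ (p+q)*n := by exact_mod_cast H1
  have h2 : (M:ℝ) + k*c1 + k*c2 ≤ n := by exact_mod_cast H2
  have h3 : (p:ℝ)^2 ≤ 6*Sp + 3*p := by exact_mod_cast H3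
  have h4 : (q:ℝ)^2 ≤ 6*Sq + 3*q := by exact_mod_cast H4
  have h5 : (p:ℝ) ≤ 3*c1 + 4 := by exact_mod_cast H5
  have h6 : (q:ℝ) ≤ 3*c2 + 2 := by exact_mod_cast H6
  have h3k := mul_le_mul_of_nonneg_left h3 hk0
  have h4k := mul_le_mul_of_nonneg_left h4 hk0
  have h5kq := mul_le_mul_of_nonneg_left h5 (mul_nonneg hk0 hq0)
  have h5k := mul_le_mul_of_nonneg_left h5 hk0
  have h6k := mul_le_mul_of_nonneg_left h6 hk0
  have h1' := mul_le_mul_of_nonneg_left h1 (by norm_num : (0:ℝ) ≤ 6)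
  have hC1 : 6*(σ:ℝ) ≤ 6*(p:ℝ)*n - k*((p:ℝ)^2-3*p) + 6*q*((n:ℝ)-M) - 2*k*q*((p:ℝ)-4) - k*((q:ℝ)^2-3*q) := by
    nlinarith [h1', h3k, h4k, h5kq]
  have hC2 : (k:ℝ)*((p:ℝ)+q) ≤ 3*((n:ℝ)-M) + 6*k := by nlinarith [h2, h5k, h6k]
  have hpq : (p:ℝ) + q ≤ (n:ℝ) - 1 := by
    have h7 : (p:ℝ) + q + 1 ≤ n := by exact_mod_cast H7
    linarith
  exact arith σ n k M p q (by exact_mod_cast hk) (by exact_mod_cast hkM) (by exact_mod_cast hMn)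
    (by exact_mod_cast H8) hq0 hpq hC1 hC2

private lemma seqKey (N : ℕ → ℕ) (e a n k M σ : ℕ)
    (he1 : 1 ≤ e) (ha : a ≤ e)
    (hzero : ∀ i, e < i → N i = 0)
    (hn : ∑ i ∈ range (e+1), N i = n)
    (hσ : σ = ∑ i ∈ range (e+1), i * N i)
    (htrip : ∀ c, c+2 ≤ e → k ≤ N c + N (c+1) + N (c+2))
    (hM : M ≤ ∑ i ∈ Finset.Icc (a-1) (a+1), N i)
    (hk : 2 ≤ k) (hkM : k ≤ M) (hMn : M ≤ n) (hen : e + 1 ≤ n) :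
    2*(k:ℝ)*σ + 3*((M:ℝ)-1)^2 ≤ 3*(n:ℝ)^2 + 14*((n:ℝ)-1)*k := by
  classical
  set r : ℕ → ℕ := fun j => ∑ i ∈ Finset.Ioc j e, N i with hr
  have hσr : σ = ∑ j ∈ range e, r j := by rw [hσ, swapSum N e]
  set c1 : ℕ := (a-1)/3 with hc1
  set c2 : ℕ := (e-a-1)/3 with hc2
  -- the M-triple as an Ico sum
  have hMIco : M ≤ ∑ i ∈ Finset.Ico (a-1) (a+2), N i := by
    rwa [show a+2 = (a+1)+1 by rfl, Finset.Ico_add_one_right_eq_Icc]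
  -- front blocks
  have hS1 : ∀ b, a-1 ≤ b → k * c1 ≤ ∑ i ∈ Finset.Ico 0 (a-1), N i := by
    intro b _
    have h := blockSum htrip c1 0 (by omega)
    refine le_trans h (Finset.sum_le_sum_of_subset ?_)
    apply Finset.Ico_subset_Ico le_rfl
    omega
  -- generic per-index fact : r j + (sum over Ico 0 (j+1)) = n
  have hrm : ∀ j, j ≤ e → r j + ∑ i ∈ Finset.Ico 0 (j+1), N i = n := by
    intro j hj
    have hIoc : Finset.Ioc j e = Finset.Ico (j+1) (e+1) := by
      ext x; simp only [Finset.mem_Ioc, Finset.mem_Ico]; omega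
    have := Finset.sum_Ico_consecutive N (by omega : 0 ≤ j+1) (by omega : j+1 ≤ e+1)
    rw [hr]; dsimp only; rw [hIoc, ← hn, Finset.range_eq_Ico]
    omega
  -- first-region bound
  have hA : ∀ j, j ≤ e → r j + k*(j/3) ≤ n := by
    intro j hj
    have hb := blockSum htrip (j/3) 0 (by omega)
    have hsub : ∑ i ∈ Finset.Ico 0 (0 + 3*(j/3)), N i ≤ ∑ i ∈ Finset.Ico 0 (j+1), N i := by
      refine Finset.sum_le_sum_of_subset (Finset.Ico_subset_Ico le_rfl (by omega))
    have := hrm j hj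
    omega
  -- second-region bound (needs a+2 ≤ j+1, j ≤ e)
  have hB : ∀ j, a+2 ≤ j+1 → j ≤ e → r j + (M + k*c1 + k*((j-a-1)/3)) ≤ n := by
    intro j hj1 hj2
    set t : ℕ := (j-a-1)/3 with ht
    have hsplit1 : ∑ i ∈ Finset.Ico 0 (a-1), N i + ∑ i ∈ Finset.Ico (a-1) (a+2), N i
        = ∑ i ∈ Finset.Ico 0 (a+2), N i :=
      Finset.sum_Ico_consecutive N (by omega) (by omega)
    have hsplit2 : ∑ i ∈ Finset.Ico 0 (a+2), N i + ∑ i ∈ Finset.Ico (a+2) (j+1), N i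
        = ∑ i ∈ Finset.Ico 0 (j+1), N i :=
      Finset.sum_Ico_consecutive N (by omega) (by omega)
    have hback : k * t ≤ ∑ i ∈ Finset.Ico (a+2) (j+1), N i := by
      have hb := blockSum htrip t (a+2) (by omega)
      refine le_trans hb (Finset.sum_le_sum_of_subset (Finset.Ico_subset_Ico le_rfl (by omega)))
    have hfront := hS1 (a-1) le_rfl
    have := hrm j hj2
    omega
  -- global constraint H2
  have H2 : M + k*c1 + k*c2 ≤ n := by
    have hn2 : ∑ i ∈ range (e+2), N i = n := by
      rw [Finset.sum_range_succ, hzero (e+1) (by omega), add_zero, hn]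
    have hsplit1 : ∑ i ∈ Finset.Ico 0 (a-1), N i + ∑ i ∈ Finset.Ico (a-1) (a+2), N i
        = ∑ i ∈ Finset.Ico 0 (a+2), N i :=
      Finset.sum_Ico_consecutive N (by omega) (by omega)
    have hsplit2 : ∑ i ∈ Finset.Ico 0 (a+2), N i + ∑ i ∈ Finset.Ico (a+2) (e+2), N i
        = ∑ i ∈ Finset.Ico 0 (e+2), N i :=
      Finset.sum_Ico_consecutive N (by omega) (by omega)
    have hback : k * c2 ≤ ∑ i ∈ Finset.Ico (a+2) (e+2), N i := by
      rcases Nat.eq_zero_or_pos c2 with h0 | hpos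
      · simp [h0]
      · have hb := blockSum htrip c2 (a+2) (by omega)
        refine le_trans hb (Finset.sum_le_sum_of_subset (Finset.Ico_subset_Ico le_rfl (by omega)))
    have hfront := hS1 (a-1) le_rfl
    rw [Finset.range_eq_Ico] at hn2
    omega
  rcases le_or_gt (a+2) e with hcase | hcase
  · -- Case B : a ≤ e-2, p = a+1, q = e-a-1
    set p : ℕ := a+1 with hp
    set q : ℕ := e-a-1 with hq
    set Sp : ℕ := ∑ j ∈ range p, j/3 with hSp
    set Sq : ℕ := ∑ t ∈ range q, t/3 with hSq
    have hsplitσ : ∑ j ∈ Finset.Ico 0 p, r j + ∑ j ∈ Finset.Ico p e, r j = ∑ j ∈ Finset.Ico 0 e, r j :=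
      Finset.sum_Ico_consecutive r (by omega) (by omega)
    have hre : ∑ j ∈ Finset.Ico p e, r j = ∑ t ∈ range (e-p), r (p+t) := by
      rw [Finset.sum_Ico_eq_sum_range]
    have hq' : e - p = q := by omega
    have hsum1 : ∑ j ∈ range p, (r j + k*(j/3)) ≤ p * n := by
      calc ∑ j ∈ range p, (r j + k*(j/3)) ≤ ∑ _j ∈ range p, n :=
            Finset.sum_le_sum (fun j hj => hA j (by simp only [Finset.mem_range] at hj; omega))
        _ = p * n := by rw [Finset.sum_const, Finset.card_range, smul_eq_mul]
    have hsum2 : ∑ t ∈ range q, (r (p+t) + (M + k*c1 + k*(t/3))) ≤ q * n := by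
      calc ∑ t ∈ range q, (r (p+t) + (M + k*c1 + k*(t/3)))
          ≤ ∑ _t ∈ range q, n := by
            refine Finset.sum_le_sum (fun t htq => ?_)
            simp only [Finset.mem_range] at htq
            have := hB (p+t) (by omega) (by omega)
            have harg : (p+t)-a-1 = t := by omega
            rw [harg] at this
            omega
        _ = q * n := by rw [Finset.sum_const, Finset.card_range, smul_eq_mul]
    have hd1 : ∑ j ∈ range p, (r j + k*(j/3)) = ∑ j ∈ range p, r j + k * Sp := by
      rw [Finset.sum_add_distrib, Finset.mul_sum]
    have hd2 : ∑ t ∈ range q, (r (p+t) + (M + k*c1 + k*(t/3)))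
        = ∑ t ∈ range q, r (p+t) + (q*M + q*(k*c1) + k*Sq) := by
      rw [Finset.sum_add_distrib, Finset.sum_add_distrib, Finset.sum_add_distrib,
        Finset.sum_const, Finset.card_range, Finset.sum_const, Finset.card_range, Finset.mul_sum]
      ring
    have H1 : σ + k*Sp + q*M + q*(k*c1) + k*Sq ≤ (p+q)*n := by
      have hσ2 : σ = ∑ j ∈ range p, r j + ∑ t ∈ range q, r (p+t) := by
        rw [hσr, Finset.range_eq_Ico, ← hsplitσ, hre, hq', ← Finset.range_eq_Ico]
      rw [hd1] at hsum1
      rw [hd2] at hsum2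
      have : (p+q)*n = p*n + q*n := by ring
      omega
    refine assemble σ n k M p q c1 c2 Sp Sq hk hkM hMn H1 H2 (floorSum p) (floorSum q)
      (by omega) (by omega) (by omega) (by omega)
  · -- Case A : a ≥ e-1, p = e, q = 0
    set Sp : ℕ := ∑ j ∈ range e, j/3 with hSp
    have hsum1 : ∑ j ∈ range e, (r j + k*(j/3)) ≤ e * n := by
      calc ∑ j ∈ range e, (r j + k*(j/3)) ≤ ∑ _j ∈ range e, n :=
            Finset.sum_le_sum (fun j hj => hA j (by simp only [Finset.mem_range] at hj; omega))
        _ = e * n := by rw [Finset.sum_const, Finset.card_range, smul_eq_mul]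
    have hd1 : ∑ j ∈ range e, (r j + k*(j/3)) = ∑ j ∈ range e, r j + k * Sp := by
      rw [Finset.sum_add_distrib, Finset.mul_sum]
    have H1 : σ + k*Sp + 0*M + 0*(k*c1) + k*0 ≤ (e+0)*n := by
      rw [hd1] at hsum1
      have h0 : (e+0)*n = e*n := by ring
      rw [h0, hσr]
      omega
    refine assemble σ n k M e 0 c1 c2 Sp 0 hk hkM hMn H1 H2 (floorSum e) (by omega)
      (by omega) (by omega) (by omega) (by omega)


private lemma reach_level {V : Type*} [Fintype V] (G : SimpleGraph V) (hG : G.Connected) (v : V) :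
    ∀ d u, G.dist v u = d → ∀ i, i ≤ d → ∃ x, G.dist v x = i := by
  intro d
  induction d using Nat.strong_induction_on with
  | _ d ih =>
    intro u hdu i hi
    rcases eq_or_lt_of_le hi with heq | hlt
    · exact ⟨u, by omega⟩
    · have hd1 : 1 ≤ d := by omega
      have hne : u ≠ v := by
        rintro rfl
        rw [SimpleGraph.dist_self] at hdu; omega
      obtain ⟨p, hp⟩ := hG.exists_walk_length_eq_dist v u
      obtain ⟨y, hadj, p', hps⟩ := SimpleGraph.Walk.exists_eq_cons_of_ne hne p.reverse
      have hplen : p'.length = d - 1 := by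
        have h1 : p.reverse.length = d := by rw [SimpleGraph.Walk.length_reverse, hp, hdu]
        rw [hps, SimpleGraph.Walk.length_cons] at h1
        omega
      have hyd : G.dist v y = d - 1 := by
        have h1 : G.dist v y ≤ d - 1 := by
          rw [← hplen, ← SimpleGraph.Walk.length_reverse]
          exact SimpleGraph.dist_le p'.reverse
        have h2 : G.dist v u ≤ G.dist v y + G.dist y u := hG.dist_triangle
        have h3 : G.dist y u ≤ 1 := by
          rw [SimpleGraph.dist_comm, SimpleGraph.dist_eq_one_iff_adj.mpr hadj]
        omega
      exact ih (d-1) (by omega) y hyd i (by omega)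

theorem remoteness_bound_min_max_degree {V : Type*} [Fintype V] [Nonempty V]
    [DecidableEq V] (G : SimpleGraph V) [DecidableRel G.Adj] (hG : G.Connected)
    (n δ Δ : ℕ) (hn : Fintype.card V = n)
    (hδ : G.minDegree = δ) (hΔ : G.maxDegree = Δ) :
    Finset.univ.sup' Finset.univ_nonempty
        (fun v => (∑ u, (G.dist v u : ℝ)) / (n - 1)) ≤
      3 * ((n : ℝ) ^ 2 - (Δ : ℝ) ^ 2) / (2 * ((n : ℝ) - 1) * ((δ : ℝ) + 1)) + 7 := by
  classical
  have hn1 : 1 ≤ n := by rw [← hn]; exact Fintype.card_pos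
  rcases eq_or_lt_of_le hn1 with h1 | hn2
  · -- n = 1 : everything divides by zero
    have hzero : ((n:ℝ) - 1) = 0 := by rw [← h1]; norm_num
    apply Finset.sup'_le
    intro v _
    rw [hzero]
    have hrhs : (0:ℝ) ≤ 3 * ((n : ℝ) ^ 2 - (Δ : ℝ) ^ 2) / (2 * ((n : ℝ) - 1) * ((δ : ℝ) + 1)) + 7 := by
      rw [hzero]
      norm_num
    simpa using hrhs
  · -- n ≥ 2
    -- global degree facts
    have hδ1 : 1 ≤ δ := by
      obtain ⟨vm, hvm⟩ := G.exists_minimal_degree_vertex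
      obtain ⟨u, hu⟩ := Fintype.exists_ne_of_one_lt_card (by omega) vm
      have hdpos : G.dist vm u ≠ 0 := by
        simp only [ne_eq, SimpleGraph.dist_eq_zero_iff_eq_or_not_reachable]
        push_neg
        exact ⟨fun h => hu h.symm, hG vm u⟩
      obtain ⟨p, hp⟩ := hG.exists_walk_length_eq_dist vm u
      obtain ⟨y, hadj, p', hps⟩ := SimpleGraph.Walk.exists_eq_cons_of_ne (Ne.symm hu) p
      have : 0 < G.degree vm := (G.degree_pos_iff_exists_adj vm).mpr ⟨y, hadj⟩
      omega
    have hkM : δ + 1 ≤ Δ + 1 := by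
      obtain ⟨vm, hvm⟩ := G.exists_minimal_degree_vertex
      have := G.degree_le_maxDegree vm
      omega
    obtain ⟨w, hw⟩ := G.exists_maximal_degree_vertex
    have hMn : Δ + 1 ≤ n := by
      have := G.degree_lt_card_verts w
      omega
    -- main per-vertex bound
    have main : ∀ v : V, 2*((δ:ℝ)+1)*(∑ u, G.dist v u : ℕ) + 3*(Δ:ℝ)^2
        ≤ 3*(n:ℝ)^2 + 14*((n:ℝ)-1)*((δ:ℝ)+1) := by
      intro v
      set Nv : ℕ → ℕ := fun i => (univ.filter (fun u => G.dist v u = i)).card with hNv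
      set e : ℕ := univ.sup (fun u => G.dist v u) with he
      have hde : ∀ u, G.dist v u ≤ e := fun u => Finset.le_sup (Finset.mem_univ u)
      have hmaps : ∀ u : V, u ∈ univ → G.dist v u ∈ range (e+1) := by
        intro u _; simp only [Finset.mem_range]; exact Nat.lt_succ_of_le (hde u)
      have hsum_n : ∑ i ∈ range (e+1), Nv i = n := by
        rw [← hn, ← Finset.card_univ, Finset.card_eq_sum_card_fiberwise hmaps]
      have hsum_σ : (∑ u, G.dist v u) = ∑ i ∈ range (e+1), i * Nv i := by
        rw [← Finset.sum_fiberwise_of_maps_to hmaps (fun u => G.dist v u)]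
        refine Finset.sum_congr rfl (fun i _ => ?_)
        have hfib : ∀ u ∈ univ.filter (fun u => G.dist v u = i), G.dist v u = i :=
          fun u hu => (Finset.mem_filter.mp hu).2
        rw [Finset.sum_congr rfl hfib, Finset.sum_const, smul_eq_mul, mul_comm]
      have hzero : ∀ i, e < i → Nv i = 0 := by
        intro i hi
        rw [hNv]
        simp only [Finset.card_eq_zero, Finset.filter_eq_empty_iff]
        intro u _
        exact fun h => by have := hde u; omega
      -- nonempty levels
      have hreach : ∀ i, i ≤ e → ∃ x, G.dist v x = i := by
        obtain ⟨u0, _, hu0⟩ := Finset.exists_mem_eq_sup univ Finset.univ_nonempty (fun u => G.dist v u)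
        exact fun i hi => reach_level G hG v e u0 hu0.symm i hi
      have hlevel : ∀ i, i ≤ e → 1 ≤ Nv i := by
        intro i hi
        obtain ⟨x, hx⟩ := hreach i hi
        refine Finset.card_pos.mpr ⟨x, ?_⟩
        simp only [Finset.mem_filter, Finset.mem_univ, true_and]
        exact hx
      have he1 : 1 ≤ e := by
        obtain ⟨u, hu⟩ := Fintype.exists_ne_of_one_lt_card (by omega) v
        have : 0 < G.dist v u := hG.pos_dist_of_ne (Ne.symm hu)
        have := hde u
        omega
      have hen : e + 1 ≤ n := by
        calc e + 1 = ∑ _i ∈ range (e+1), 1 := by rw [Finset.sum_const, Finset.card_range, smul_eq_mul, mul_one]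
          _ ≤ ∑ i ∈ range (e+1), Nv i := Finset.sum_le_sum (fun i hi => hlevel i (by simp only [Finset.mem_range] at hi; omega))
          _ = n := hsum_n
      -- triple property
      have htrip : ∀ c, c+2 ≤ e → δ+1 ≤ Nv c + Nv (c+1) + Nv (c+2) := by
        intro c hc
        obtain ⟨x, hx⟩ := hreach (c+1) (by omega)
        have hsub : insert x (G.neighborFinset x) ⊆
            (univ.filter (fun u => G.dist v u = c)) ∪ (univ.filter (fun u => G.dist v u = c+1))
              ∪ (univ.filter (fun u => G.dist v u = c+2)) := by
          intro y hy
          simp only [Finset.mem_insert, SimpleGraph.mem_neighborFinset] at hy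
          have hdy : c ≤ G.dist v y ∧ G.dist v y ≤ c + 2 := by
            rcases hy with rfl | hadj
            · omega
            · have h1 : G.dist v y ≤ G.dist v x + G.dist x y := hG.dist_triangle
              have h2 : G.dist v x ≤ G.dist v y + G.dist y x := hG.dist_triangle
              have h3 : G.dist x y = 1 := SimpleGraph.dist_eq_one_iff_adj.mpr hadj
              have h4 : G.dist y x = 1 := SimpleGraph.dist_eq_one_iff_adj.mpr hadj.symm
              omega
          simp only [Finset.mem_union, Finset.mem_filter, Finset.mem_univ, true_and]
          omega
        have hcard : δ + 1 ≤ (insert x (G.neighborFinset x)).card := by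
          rw [Finset.card_insert_of_notMem (G.notMem_neighborFinset_self x)]
          have h5 : G.minDegree ≤ G.degree x := G.minDegree_le_degree x
          rw [← SimpleGraph.card_neighborFinset_eq_degree] at h5
          omega
        calc δ + 1 ≤ _ := hcard
          _ ≤ _ := Finset.card_le_card hsub
          _ ≤ ((univ.filter (fun u => G.dist v u = c)) ∪ (univ.filter (fun u => G.dist v u = c+1))).card
              + (univ.filter (fun u => G.dist v u = c+2)).card := Finset.card_union_le _ _
          _ ≤ ((univ.filter (fun u => G.dist v u = c)).card + (univ.filter (fun u => G.dist v u = c+1)).card)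
              + (univ.filter (fun u => G.dist v u = c+2)).card :=
            Nat.add_le_add_right (Finset.card_union_le _ _) _
          _ = Nv c + Nv (c+1) + Nv (c+2) := rfl
      -- max degree triple
      set a : ℕ := G.dist v w with ha'
      have hwdeg : G.degree w = Δ := by omega
      have hMtrip : Δ + 1 ≤ ∑ i ∈ Finset.Icc (a-1) (a+1), Nv i := by
        set S := univ.filter (fun u => G.dist v u ∈ Finset.Icc (a-1) (a+1)) with hS
        have hsub : insert w (G.neighborFinset w) ⊆ S := by
          intro y hy
          simp only [Finset.mem_insert, SimpleGraph.mem_neighborFinset] at hy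
          simp only [hS, Finset.mem_filter, Finset.mem_univ, true_and, Finset.mem_Icc]
          rcases hy with rfl | hadj
          · omega
          · have h1 : G.dist v y ≤ G.dist v w + G.dist w y := hG.dist_triangle
            have h2 : G.dist v w ≤ G.dist v y + G.dist y w := hG.dist_triangle
            have h3 : G.dist w y = 1 := SimpleGraph.dist_eq_one_iff_adj.mpr hadj
            have h4 : G.dist y w = 1 := SimpleGraph.dist_eq_one_iff_adj.mpr hadj.symm
            omega
        have hcard : Δ + 1 ≤ S.card := by
          have h5 : (insert w (G.neighborFinset w)).card = Δ + 1 := by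
            rw [Finset.card_insert_of_notMem (G.notMem_neighborFinset_self w),
              SimpleGraph.card_neighborFinset_eq_degree, hwdeg]
          rw [← h5]
          exact Finset.card_le_card hsub
        have hfib : S.card = ∑ i ∈ Finset.Icc (a-1) (a+1), Nv i := by
          rw [Finset.card_eq_sum_card_fiberwise
            (fun u hu => (Finset.mem_filter.mp hu).2 : ∀ u ∈ S, G.dist v u ∈ Finset.Icc (a-1) (a+1))]
          refine Finset.sum_congr rfl (fun b hb => ?_)
          congr 1
          ext u
          simp only [hS, Finset.mem_filter, Finset.mem_univ, true_and, Finset.mem_Icc] at *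
          omega
        omega
      have haa : a ≤ e := hde w
      have key := seqKey Nv e a n (δ+1) (Δ+1) (∑ u, G.dist v u) he1 haa hzero hsum_n hsum_σ
        htrip hMtrip (by omega) hkM hMn hen
      push_cast at key
      push_cast
      linarith [key]
    -- final assembly
    apply Finset.sup'_le
    intro v _
    have key := main v
    have hnR : (0:ℝ) < (n:ℝ) - 1 := by
      have h2 : (2:ℝ) ≤ (n:ℝ) := by exact_mod_cast hn2
      linarith
    have hcast : (∑ u, (G.dist v u : ℝ)) = ((∑ u, G.dist v u : ℕ) : ℝ) := by push_cast; rfl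
    rw [hcast, div_le_iff₀ hnR, add_mul]
    have hq : 3*((n:ℝ)^2-(Δ:ℝ)^2)/(2*((n:ℝ)-1)*((δ:ℝ)+1))*((n:ℝ)-1)
        = (3*(n:ℝ)^2-3*(Δ:ℝ)^2)/(2*((δ:ℝ)+1)) := by
      field_simp
    rw [hq, ← sub_le_iff_le_add, le_div_iff₀ (by positivity : (0:ℝ) < 2*((δ:ℝ)+1))]
    nlinarith [key]
end

section
/- Let T be a finite tree with a nonnegative vertex weight function c of total weight N, and let v be a vertex of T whose c-branch weight is at most N/2 (i.e., a c-median vertex). Then for any two distinct components T_i, T_j of T − v whose combined weight C_i + C_j is at most N/2, moving the subtree T_i to be attached below T_j (deleting the edge from v to T_i and adding an edge from the v-neighbour in T_i to the v-neighbour in T_j) yields a tree H in which v is still a c-median vertex and σ_c(v,H) = σ_c(v,T) + C_i. -/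
open Finset
open scoped Classical

/-- The total weight of the component of `T - v` containing `u`
(`0` if `u = v`). -/
noncomputable def compWeight {V : Type*} [Fintype V]
    (T : SimpleGraph V) (c : V → ℝ) (v u : V) : ℝ :=
  ∑ w, if ∃ (hu : u ∈ ({v}ᶜ : Set V)) (hw : w ∈ ({v}ᶜ : Set V)),
      (SimpleGraph.induce ({v}ᶜ : Set V) T).Reachable ⟨u, hu⟩ ⟨w, hw⟩
    then c w else 0

/-!
Deleting `s(v, ui)` and adding `s(ui, uj)` keeps `H` connected with as many edges as `T`, so `H`
is a tree. The components of `H - v` are those of `T - v` with `T_i` and `T_j` merged, so every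
branch weight of `v` in `H` is still at most `N / 2`, and `v` is a median of `H` by the easy half
of the Kariv–Hakimi characterisation. Finally `d_H(v, w) = d_T(v, w) + [w ∈ T_i]`, since the
vertices of `T_i` now hang one level deeper, below `uj`.
-/

namespace SimpleGraph

variable {V : Type*} {G G' : SimpleGraph V} {v a b d x y : V}

def SameBranch (G : SimpleGraph V) (v a b : V) : Prop :=
  ∃ (ha : a ∈ ({v}ᶜ : Set V)) (hb : b ∈ ({v}ᶜ : Set V)),
    (G.induce ({v}ᶜ : Set V)).Reachable ⟨a, ha⟩ ⟨b, hb⟩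

namespace SameBranch

lemma ne_right (h : G.SameBranch v a b) : b ≠ v := h.2.1

lemma refl (ha : a ≠ v) : G.SameBranch v a a := ⟨ha, ha, .refl _⟩

lemma symm (h : G.SameBranch v a b) : G.SameBranch v b a :=
  let ⟨ha, hb, hr⟩ := h; ⟨hb, ha, hr.symm⟩

lemma trans (h₁ : G.SameBranch v a b) (h₂ : G.SameBranch v b d) : G.SameBranch v a d :=
  let ⟨ha, _, hr₁⟩ := h₁; let ⟨_, hd, hr₂⟩ := h₂; ⟨ha, hd, hr₁.trans hr₂⟩

lemma of_adj (h : G.Adj a b) (ha : a ≠ v) (hb : b ≠ v) : G.SameBranch v a b :=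
  ⟨ha, hb, Adj.reachable (by simpa using h)⟩

lemma reachable (h : G.SameBranch v a b) : G.Reachable a b :=
  let ⟨_, _, hr⟩ := h; hr.map (Embedding.induce _).toHom

lemma of_walk (p : G.Walk a b) (hp : v ∉ p.support) : G.SameBranch v a b := by
  induction p with
  | nil => exact refl (by simpa [eq_comm] using hp)
  | cons h q ih =>
    rw [Walk.support_cons, List.mem_cons, not_or] at hp
    exact (of_adj h (Ne.symm hp.1) fun e ↦ hp.2 (e ▸ q.start_mem_support)).trans (ih hp.2)

@[elab_as_elim]
lemma induction_on {R : V → V → Prop} (h : G.SameBranch v a b)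
    (hrefl : ∀ a, a ≠ v → R a a) (htrans : ∀ a b d, R a b → R b d → R a d)
    (hadj : ∀ a b, a ≠ v → b ≠ v → G.Adj a b → R a b) : R a b := by
  obtain ⟨_, _, hr⟩ := h
  suffices ∀ p q : ({v}ᶜ : Set V), (G.induce _).Reachable p q → R p q from this _ _ hr
  intro p q hpq
  rw [reachable_iff_reflTransGen] at hpq
  induction hpq with
  | refl => exact hrefl p p.2
  | @tail q r _ hqr ih => exact htrans _ _ _ ih (hadj _ _ q.2 r.2 hqr)

lemma mono (h : G.SameBranch v a b)
    (hle : ∀ a b, a ≠ v → b ≠ v → G.Adj a b → G'.Adj a b) : G'.SameBranch v a b :=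
  h.induction_on (fun _ ↦ refl) (fun _ _ _ ↦ trans) fun _ _ ha hb hab ↦
    of_adj (hle _ _ ha hb hab) ha hb

end SameBranch

lemma ne_of_not_sameBranch (h : ¬ G.SameBranch v a b) (ha : a ≠ v) : a ≠ b :=
  fun hab ↦ h (hab ▸ .refl ha)

lemma compWeight_eq_sum_sameBranch [Fintype V] (c : V → ℝ) :
    compWeight G c v a = ∑ w, if G.SameBranch v a w then c w else 0 := by
  unfold compWeight SameBranch
  exact sum_congr rfl fun w _ ↦ by congr

lemma Connected.sub_le_dist_of_forall_adj (hG : G.Connected) (f : V → ℤ)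
    (hf : ∀ a b, G.Adj a b → f b ≤ f a + 1) (a b : V) : f b - f a ≤ G.dist a b := by
  obtain ⟨p, hp⟩ := hG.exists_walk_length_eq_dist a b
  rw [← hp]
  clear hp
  induction p with
  | nil => simp
  | cons h q ih =>
    rw [Walk.length_cons]
    push_cast
    linarith [hf _ _ h]

lemma Connected.of_forall_adj_reachable (hG : G.Connected)
    (h : ∀ a b, G.Adj a b → G'.Reachable a b) : G'.Connected := by
  have := hG.nonempty
  refine .mk fun a b ↦ ?_
  obtain ⟨p⟩ := hG a b
  induction p with
  | nil => rfl
  | cons hab _ ih => exact (h _ _ hab).trans ih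

lemma Connected.dist_eq_add_of_not_sameBranch (hG : G.Connected) (h : ¬ G.SameBranch v a b) :
    G.dist a b = G.dist a v + G.dist v b := by
  obtain ⟨p, hp⟩ := hG.exists_walk_length_eq_dist a b
  have hv : v ∈ p.support := by_contra fun hv ↦ h (.of_walk p hv)
  refine hG.dist_triangle.antisymm ?_
  calc G.dist a v + G.dist v b ≤ (p.takeUntil v hv).length + (p.dropUntil v hv).length :=
        add_le_add (dist_le _) (dist_le _)
    _ = G.dist a b := by rw [← Walk.length_append, Walk.take_spec, hp]

/-- The easy half of the Kariv–Hakimi characterisation. -/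
theorem Connected.sum_mul_dist_le_of_compWeight_le [Fintype V] (hG : G.Connected) {c : V → ℝ}
    (hc : ∀ w, 0 ≤ c w) (hv : ∀ u, compWeight G c v u ≤ (∑ w, c w) / 2) (u : V) :
    ∑ w, c w * G.dist v w ≤ ∑ w, c w * G.dist u w := by
  -- seen from `v` instead of `u`, vertices in the branch of `u` get at most `d(u, v)` farther,
  -- all others exactly `d(u, v)` closer
  have hpoint : ∀ w, c w * G.dist v w ≤
      c w * G.dist u w + G.dist u v * (2 * (if G.SameBranch v u w then c w else 0) - c w) := by
    intro w
    split_ifs with h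
    · have : (G.dist v w : ℝ) ≤ G.dist u v + G.dist u w := by
        rw [dist_comm (u := u)]; exact_mod_cast hG.dist_triangle
      nlinarith [hc w]
    · have : (G.dist u w : ℝ) = G.dist u v + G.dist v w := by
        exact_mod_cast hG.dist_eq_add_of_not_sameBranch h
      rw [this]
      linarith
  have hD : (0 : ℝ) ≤ G.dist u v := Nat.cast_nonneg _
  calc ∑ w, c w * G.dist v w
      ≤ ∑ w, (c w * G.dist u w +
          G.dist u v * (2 * (if G.SameBranch v u w then c w else 0) - c w)) :=
        sum_le_sum fun w _ ↦ hpoint w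
    _ = ∑ w, c w * G.dist u w + G.dist u v * (2 * compWeight G c v u - ∑ w, c w) := by
        rw [sum_add_distrib, ← mul_sum, sum_sub_distrib, ← mul_sum,
          compWeight_eq_sum_sameBranch]
    _ ≤ ∑ w, c w * G.dist u w := by nlinarith [hv u]

lemma _root_.Sym2.mk_ne_mk_of_ne_of_ne (ha : a ≠ v) (hb : b ≠ v) : s(a, b) ≠ s(v, x) := by
  intro h
  have := h ▸ Sym2.mem_mk_left v x
  rw [Sym2.mem_iff] at this
  tauto

lemma IsAcyclic.eq_of_adj_of_sameBranch (hG : G.IsAcyclic) (hx : G.Adj v x) (hy : G.Adj v y)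
    (h : G.SameBranch v x y) : x = y := by
  by_contra hxy
  refine isBridge_iff.mp (isAcyclic_iff_forall_adj_isBridge.mp hG hy) ?_
  have hvx : (G.deleteEdges {s(v, y)}).Adj v x :=
    deleteEdges_adj.mpr ⟨hx, fun he ↦ hxy (Sym2.congr_right.mp he)⟩
  refine hvx.reachable.trans (h.mono fun a b ha hb hab ↦ ?_).reachable
  exact deleteEdges_adj.mpr ⟨hab, Sym2.mk_ne_mk_of_ne_of_ne ha hb⟩

lemma IsAcyclic.sameBranch_iff_of_adj (hG : G.IsAcyclic) (hvx : G.Adj v x) (hab : G.Adj a b)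
    (hne : s(a, b) ≠ s(v, x)) : G.SameBranch v x a ↔ G.SameBranch v x b := by
  have hv : ∀ {a b}, G.Adj a b → s(a, b) ≠ s(v, x) → a = v → ¬ G.SameBranch v x b := by
    rintro a b hab hne rfl h
    exact hne (by rw [hG.eq_of_adj_of_sameBranch hab hvx h.symm])
  by_cases ha : a = v
  · exact iff_of_false (fun h ↦ h.ne_right ha) (hv hab hne ha)
  by_cases hb : b = v
  · exact iff_of_false (hv hab.symm (by rwa [Sym2.eq_swap]) hb) (fun h ↦ h.ne_right hb)
  have hab' := SameBranch.of_adj hab ha hb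
  exact ⟨fun h ↦ h.trans hab', fun h ↦ h.trans hab'.symm⟩

variable {T : SimpleGraph V}

/-- The tree `H` of the statement: the branch of `T - v` through the neighbour `x` of `v` is
detached from `v` and hung below `y`. -/
def moveBranch (T : SimpleGraph V) (v x y : V) : SimpleGraph V :=
  fromEdgeSet ((T.edgeSet \ {s(v, x)}) ∪ {s(x, y)})

lemma moveBranch_adj (hxy : x ≠ y) :
    (moveBranch T v x y).Adj a b ↔ (T.Adj a b ∧ s(a, b) ≠ s(v, x)) ∨ s(a, b) = s(x, y) := by
  simp only [moveBranch, fromEdgeSet_adj, Set.mem_union, Set.mem_sdiff, mem_edgeSet,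
    Set.mem_singleton_iff]
  refine ⟨And.left, fun h ↦ ⟨h, ?_⟩⟩
  rintro rfl
  rcases h with ⟨h, -⟩ | h
  · exact h.ne rfl
  · exact hxy (Sym2.mk_isDiag_iff.mp (h ▸ Sym2.mk_isDiag_iff.mpr rfl))

lemma edgeSet_moveBranch (hxy : x ≠ y) :
    (moveBranch T v x y).edgeSet = insert s(x, y) (T.edgeSet \ {s(v, x)}) := by
  ext e
  induction e using Sym2.ind with
  | _ a b =>
    rw [mem_edgeSet, moveBranch_adj hxy]
    simp only [Set.mem_insert_iff, Set.mem_sdiff, mem_edgeSet, Set.mem_singleton_iff]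
    tauto

lemma connected_moveBranch (hT : T.Connected) (hvx : T.Adj v x) (hvy : T.Adj v y)
    (hxy : x ≠ y) : (moveBranch T v x y).Connected := by
  have hvx' : (moveBranch T v x y).Reachable v x := by
    have hvy' :=
      (moveBranch_adj hxy).mpr (.inl ⟨hvy, fun h ↦ hxy (Sym2.congr_right.mp h).symm⟩)
    exact hvy'.reachable.trans ((moveBranch_adj hxy).mpr (.inr Sym2.eq_swap)).reachable
  refine hT.of_forall_adj_reachable fun a b hab ↦ ?_
  by_cases he : s(a, b) = s(v, x)
  · rcases Sym2.eq_iff.mp he with ⟨rfl, rfl⟩ | ⟨rfl, rfl⟩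
    exacts [hvx', hvx'.symm]
  · exact ((moveBranch_adj hxy).mpr (.inl ⟨hab, he⟩)).reachable

lemma isTree_moveBranch [Finite V] (hT : T.IsTree) (hvx : T.Adj v x) (hvy : T.Adj v y)
    (hxy : ¬ T.SameBranch v x y) : (moveBranch T v x y).IsTree := by
  have hne := ne_of_not_sameBranch hxy hvx.ne'
  rw [isTree_iff_connected_and_card] at hT ⊢
  refine ⟨connected_moveBranch hT.1 hvx hvy hne, ?_⟩
  have hnew : s(x, y) ∉ T.edgeSet \ {s(v, x)} := fun h ↦
    hxy (.of_adj h.1 hvx.ne' hvy.ne')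
  rw [← hT.2, edgeSet_moveBranch hne, Nat.card_coe_set_eq, Nat.card_coe_set_eq,
    Set.ncard_insert_of_notMem hnew, Set.ncard_sdiff_singleton_add_one (s := T.edgeSet) hvx]

lemma sameBranch_moveBranch_iff (hx : x ≠ v) (hy : y ≠ v) (hxy : x ≠ y) :
    (moveBranch T v x y).SameBranch v a b ↔ T.SameBranch v a b ∨
      ((T.SameBranch v x a ∨ T.SameBranch v y a) ∧
        (T.SameBranch v x b ∨ T.SameBranch v y b)) := by
  have hTH {a b : V} (h : T.SameBranch v a b) : (moveBranch T v x y).SameBranch v a b :=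
    h.mono fun _ _ ha hb hab ↦
      (moveBranch_adj hxy).mpr (.inl ⟨hab, Sym2.mk_ne_mk_of_ne_of_ne ha hb⟩)
  have hxH {a : V} (h : T.SameBranch v x a ∨ T.SameBranch v y a) :
      (moveBranch T v x y).SameBranch v x a := by
    rcases h with h | h
    · exact hTH h
    · exact (SameBranch.of_adj ((moveBranch_adj hxy).mpr (.inr rfl)) hx hy).trans (hTH h)
  have hmerge {a b : V} (hab : T.SameBranch v a b) :
      T.SameBranch v x b ∨ T.SameBranch v y b → T.SameBranch v x a ∨ T.SameBranch v y a :=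
    Or.imp (·.trans hab.symm) (·.trans hab.symm)
  refine ⟨fun h ↦ ?_, ?_⟩
  · refine h.induction_on (fun _ ha ↦ .inl (.refl ha)) ?_ ?_
    · rintro a b d (hab | ⟨ha, hb⟩) (hbd | ⟨hb', hd⟩)
      · exact .inl (hab.trans hbd)
      · exact .inr ⟨hmerge hab hb', hd⟩
      · exact .inr ⟨ha, hmerge hbd.symm hb⟩
      · exact .inr ⟨ha, hd⟩
    · intro a b ha hb hab
      rcases (moveBranch_adj hxy).mp hab with ⟨hab, -⟩ | he
      · exact .inl (.of_adj hab ha hb)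
      · rcases Sym2.eq_iff.mp he with ⟨rfl, rfl⟩ | ⟨rfl, rfl⟩
        · exact .inr ⟨.inl (.refl hx), .inr (.refl hy)⟩
        · exact .inr ⟨.inr (.refl hy), .inl (.refl hx)⟩
  · rintro (h | ⟨ha, hb⟩)
    · exact hTH h
    · exact (hxH ha).symm.trans (hxH hb)

lemma compWeight_moveBranch_le [Fintype V] (hvx : T.Adj v x) (hvy : T.Adj v y)
    (hxy : ¬ T.SameBranch v x y) {c : V → ℝ} {N : ℝ}
    (hmed : ∀ u, compWeight T c v u ≤ N / 2)
    (hsmall : compWeight T c v x + compWeight T c v y ≤ N / 2) (u : V) :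
    compWeight (moveBranch T v x y) c v u ≤ N / 2 := by
  have hiff := fun w ↦ sameBranch_moveBranch_iff (T := T) (a := u) (b := w) hvx.ne' hvy.ne'
    (ne_of_not_sameBranch hxy hvx.ne')
  by_cases hu : T.SameBranch v x u ∨ T.SameBranch v y u
  · have hmerged (w : V) : (moveBranch T v x y).SameBranch v u w ↔
        T.SameBranch v x w ∨ T.SameBranch v y w := by
      refine (hiff w).trans ⟨?_, fun hw ↦ .inr ⟨hu, hw⟩⟩
      rintro (huw | ⟨-, hw⟩)
      exacts [hu.imp (·.trans huw) (·.trans huw), hw]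
    calc compWeight (moveBranch T v x y) c v u = compWeight T c v x + compWeight T c v y := by
          simp only [compWeight_eq_sum_sameBranch, hmerged, ← sum_add_distrib]
          refine sum_congr rfl fun w _ ↦ ?_
          by_cases hxw : T.SameBranch v x w <;> by_cases hyw : T.SameBranch v y w
          · exact absurd (hxw.trans hyw.symm) hxy
          all_goals simp [hxw, hyw]
      _ ≤ N / 2 := hsmall
  · calc compWeight (moveBranch T v x y) c v u = compWeight T c v u := by
          simp only [compWeight_eq_sum_sameBranch, hiff, hu, false_and, or_false]
      _ ≤ N / 2 := hmed u

lemma dist_moveBranch (hT : T.IsTree) (hvx : T.Adj v x) (hvy : T.Adj v y)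
    (hxy : ¬ T.SameBranch v x y) (w : V) :
    (moveBranch T v x y).dist v w = T.dist v w + if T.SameBranch v x w then 1 else 0 := by
  set H := moveBranch T v x y
  have hne := ne_of_not_sameBranch hxy hvx.ne'
  have hH : H.Connected := connected_moveBranch hT.1 hvx hvy hne
  have hvx_dist : H.dist v x ≤ 2 := by
    have hvy' :=
      (moveBranch_adj hne).mpr (.inl ⟨hvy, fun h ↦ hne (Sym2.congr_right.mp h).symm⟩)
    simpa using dist_le (hvy'.toWalk.concat ((moveBranch_adj hne).mpr (.inr Sym2.eq_swap)))
  have hxx : T.SameBranch v x x := .refl hvx.ne'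
  have hvv : ¬ T.SameBranch v x v := fun h ↦ h.ne_right rfl
  -- Both bounds compare the distance with a function changing by at most one along each edge;
  -- the indicator of the moved branch is constant along all edges but `s(v, x)` and `s(x, y)`.
  have lower := hH.sub_le_dist_of_forall_adj
    (fun w ↦ T.dist v w + if T.SameBranch v x w then 1 else 0) ?_ v w
  have upper := hT.1.sub_le_dist_of_forall_adj
    (fun w ↦ H.dist v w - if T.SameBranch v x w then 1 else 0) ?_ v w
  · simp only [dist_self, hvv, if_false] at lower upper
    split_ifs at lower upper ⊢ <;> omega
  · intro a b hab
    by_cases he : s(a, b) = s(v, x)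
    · rcases Sym2.eq_iff.mp he with ⟨rfl, rfl⟩ | ⟨rfl, rfl⟩ <;>
        simp only [dist_self, hvv, hxx, if_false, if_true] <;> omega
    · have hHab : H.Adj a b := (moveBranch_adj hne).mpr (.inl ⟨hab, he⟩)
      simp only [hT.isAcyclic.sameBranch_iff_of_adj hvx hab he]
      have := hHab.diff_dist_adj (u := v)
      split_ifs <;> omega
  · intro a b hab
    rcases (moveBranch_adj hne).mp hab with ⟨hab, he⟩ | he
    · simp only [hT.isAcyclic.sameBranch_iff_of_adj hvx hab he]
      have := hab.diff_dist_adj (u := v)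
      split_ifs <;> omega
    · rcases Sym2.eq_iff.mp he with ⟨rfl, rfl⟩ | ⟨rfl, rfl⟩ <;>
        simp [dist_eq_one_iff_adj.mpr hvx, dist_eq_one_iff_adj.mpr hvy, hxx, hxy]

lemma sum_mul_dist_moveBranch [Fintype V] (hT : T.IsTree) (hvx : T.Adj v x) (hvy : T.Adj v y)
    (hxy : ¬ T.SameBranch v x y) (c : V → ℝ) :
    ∑ w, c w * (moveBranch T v x y).dist v w = ∑ w, c w * T.dist v w + compWeight T c v x := by
  rw [compWeight_eq_sum_sameBranch, ← sum_add_distrib]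
  refine sum_congr rfl fun w _ ↦ ?_
  rw [dist_moveBranch hT hvx hvy hxy]
  split_ifs <;> push_cast <;> ring

end SimpleGraph

theorem move_branch_keeps_median_general {V : Type*} [Fintype V]
    (T : SimpleGraph V) (hT : T.IsTree)
    (c : V → ℝ) (hc : ∀ v, 0 ≤ c v)
    (N : ℝ) (hN : N = ∑ u, c u)
    (v ui uj : V) (hvi : T.Adj v ui) (hvj : T.Adj v uj)
    -- the components of `T - v` containing `ui` and `uj` are distinct:
    (hdist : ¬ ∃ (hi : ui ∈ ({v}ᶜ : Set V)) (hj : uj ∈ ({v}ᶜ : Set V)),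
        (SimpleGraph.induce ({v}ᶜ : Set V) T).Reachable ⟨ui, hi⟩ ⟨uj, hj⟩)
    -- `v` is a `c`-median vertex: its branch weight is at most `N / 2`:
    (hmedian : ∀ u : V, compWeight T c v u ≤ N / 2)
    -- the combined weight of the two components is at most `N / 2`:
    (hsmall : compWeight T c v ui + compWeight T c v uj ≤ N / 2) :
    ∀ H : SimpleGraph V,
      H = SimpleGraph.fromEdgeSet ((T.edgeSet \ {s(v, ui)}) ∪ {s(ui, uj)}) →
      H.IsTree ∧
      (∀ u : V, compWeight H c v u ≤ N / 2) ∧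
      (∀ u : V, (∑ w, c w * H.dist v w) ≤ ∑ w, c w * H.dist u w) ∧
      (∑ w, c w * H.dist v w) = (∑ w, c w * T.dist v w) + compWeight T c v ui := by
  rintro H rfl
  have hH : (SimpleGraph.moveBranch T v ui uj).IsTree :=
    SimpleGraph.isTree_moveBranch hT hvi hvj hdist
  have hmedianH := SimpleGraph.compWeight_moveBranch_le hvi hvj hdist hmedian hsmall
  refine ⟨hH, hmedianH, ?_, SimpleGraph.sum_mul_dist_moveBranch hT hvi hvj hdist c⟩
  exact hH.connected.sum_mul_dist_le_of_compWeight_le hc (hN ▸ hmedianH)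

theorem move_branch_keeps_median {V : Type*} [Fintype V] [DecidableEq V]
    (T : SimpleGraph V) (hT : T.IsTree)
    (c : V → ℝ) (hc : ∀ v, 0 ≤ c v)
    (N : ℝ) (hN : N = ∑ u, c u)
    (v ui uj : V) (hvi : T.Adj v ui) (hvj : T.Adj v uj)
    -- the components of `T - v` containing `ui` and `uj` are distinct:
    (hdist : ¬ ∃ (hi : ui ∈ ({v}ᶜ : Set V)) (hj : uj ∈ ({v}ᶜ : Set V)),
        (SimpleGraph.induce ({v}ᶜ : Set V) T).Reachable ⟨ui, hi⟩ ⟨uj, hj⟩)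
    -- `v` is a `c`-median vertex: its branch weight is at most `N / 2`:
    (hmedian : ∀ u : V, compWeight T c v u ≤ N / 2)
    -- the combined weight of the two components is at most `N / 2`:
    (hsmall : compWeight T c v ui + compWeight T c v uj ≤ N / 2) :
    ∀ H : SimpleGraph V,
      H = SimpleGraph.fromEdgeSet ((T.edgeSet \ {s(v, ui)}) ∪ {s(ui, uj)}) →
      H.IsTree ∧
      (∀ u : V, compWeight H c v u ≤ N / 2) ∧
      (∀ u : V, (∑ w, c w * H.dist v w) ≤ ∑ w, c w * H.dist u w) ∧
      (∑ w, c w * H.dist v w) = (∑ w, c w * T.dist v w) + compWeight T c v ui :=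
  move_branch_keeps_median_general T hT c hc N hN v ui uj hvi hvj hdist hmedian hsmall
end

section
/- Let n, Δ, δ be integers with 3 ≤ δ < Δ < n such that δ+1 divides n−Δ, and let k = (n−Δ)/(δ+1). The sequential sum graph G = K_δ + K_1 + [K_1 + K_{δ−1} + K_1]^{k−1} + K_1 + K_{Δ−1} has order n, minimum degree δ and maximum degree Δ. -/
open Finset

/-- The sequential sum of a list of complete graphs with the given orders:
vertices within a block are all adjacent, and all vertices of consecutive
blocks are joined. -/
def seqSum (Ls : List ℕ) : SimpleGraph (Σ i : Fin Ls.length, Fin (Ls.get i)) where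
  Adj x y := (x.1 = y.1 ∧ x ≠ y) ∨ x.1.val + 1 = y.1.val ∨ y.1.val + 1 = x.1.val
  symm := by
    constructor
    rintro x y (⟨h, hne⟩ | h | h)
    · exact Or.inl ⟨h.symm, fun e => hne e.symm⟩
    · exact Or.inr (Or.inr h)
    · exact Or.inr (Or.inl h)
  loopless := by
    constructor
    rintro x (⟨_, hne⟩ | h | h)
    · exact hne rfl
    · omega
    · omega

instance (Ls : List ℕ) : DecidableRel (seqSum Ls).Adj := fun x y =>
  decidable_of_iff
    ((x.1 = y.1 ∧ x ≠ y) ∨ x.1.val + 1 = y.1.val ∨ y.1.val + 1 = x.1.val) Iff.rfl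

/-- The list of block orders of the graph
`K_δ + K_1 + [K_1 + K_{δ-1} + K_1]^{k-1} + K_1 + K_{Δ-1}`. -/
def blockSizes (Δ δ k : ℕ) : List ℕ :=
  [δ, 1] ++ (List.replicate (k - 1) [1, δ - 1, 1]).flatten ++ [1, Δ - 1]

/-!
A vertex in block `i` of a sequential sum of complete graphs is adjacent to all other vertices
of blocks `i - 1`, `i`, `i + 1`, so its degree is `L (i-1) + L i - 1 + L (i+1)`. In
`K_δ + K_1 + [K_1 + K_{δ-1} + K_1]^{k-1} + K_1 + K_{Δ-1}` this gives `δ` on `K_δ`, on each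
`K_{δ-1}` and on each `K_1` next to a `K_{δ-1}`, `δ + 1` on the `K_1` next to `K_δ`, `Δ` on the
`K_1` next to `K_{Δ-1}` and `Δ - 1` on `K_{Δ-1}`. The order is `(δ + 1) k + Δ = n`.
-/

open SimpleGraph

theorem List.getD_flatten_replicate {α : Type*} (l : List α) (d : α) (r p : ℕ)
    (hp : p < r * l.length) :
    (List.replicate r l).flatten.getD p d = l.getD (p % l.length) d := by
  induction r generalizing p with
  | zero => simp at hp
  | succ r ih =>
    rw [List.replicate_succ, List.flatten_cons]
    rcases lt_or_ge p l.length with hpl | hpl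
    · rw [List.getD_append _ _ _ _ hpl, Nat.mod_eq_of_lt hpl]
    · rw [List.getD_append_right _ _ _ _ hpl, ih _ (by rw [Nat.succ_mul] at hp; omega),
        ← Nat.mod_eq_sub_mod hpl]

theorem List.sum_fin_ite_val_eq_getD {M : Type*} [AddCommMonoid M] (l : List M) (m : ℕ) :
    ∑ j : Fin l.length, (if (j : ℕ) = m then l.get j else 0) = l.getD m 0 := by
  by_cases hm : m < l.length
  · rw [Finset.sum_eq_single_of_mem ⟨m, hm⟩ (Finset.mem_univ _), if_pos rfl,
      List.getD_eq_getElem _ _ hm, List.get_eq_getElem]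
    intro j _ hj
    rw [if_neg fun h => hj (Fin.ext h)]
  · rw [List.getD_eq_default _ _ (not_lt.mp hm)]
    exact Finset.sum_eq_zero fun j _ => if_neg (by omega)

theorem List.card_sigma_fin_get (Ls : List ℕ) :
    Fintype.card (Σ i : Fin Ls.length, Fin (Ls.get i)) = Ls.sum := by
  simp [Fintype.card_sigma]

theorem List.exists_sigma_fst_eq_of_getD_pos (Ls : List ℕ) {m : ℕ} (hm : 0 < Ls.getD m 0) :
    ∃ x : Σ i : Fin Ls.length, Fin (Ls.get i), (x.1 : ℕ) = m := by
  have hlen : m < Ls.length := by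
    by_contra h
    rw [Ls.getD_eq_default 0 (not_lt.mp h)] at hm
    exact hm.false
  exact ⟨⟨⟨m, hlen⟩, ⟨0, by rwa [← Ls.getD_eq_get 0]⟩⟩, rfl⟩

theorem SimpleGraph.minDegree_eq_of_forall_le_degree {V : Type*} [Fintype V] (G : SimpleGraph V)
    [DecidableRel G.Adj] {d : ℕ} (v : V) (hv : G.degree v = d) (h : ∀ w, d ≤ G.degree w) :
    G.minDegree = d :=
  have : Nonempty V := ⟨v⟩
  le_antisymm (hv ▸ G.minDegree_le_degree v) (G.le_minDegree_of_forall_le_degree d h)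

theorem SimpleGraph.maxDegree_eq_of_forall_degree_le {V : Type*} [Fintype V] (G : SimpleGraph V)
    [DecidableRel G.Adj] {d : ℕ} (v : V) (hv : G.degree v = d) (h : ∀ w, G.degree w ≤ d) :
    G.maxDegree = d :=
  le_antisymm (G.maxDegree_le_of_forall_degree_le d h) (hv ▸ G.degree_le_maxDegree v)

section SeqSum

variable (Ls : List ℕ)

theorem card_adj_seqSum_block (i j : Fin Ls.length) (v : Fin (Ls.get i)) :
    #{w | (seqSum Ls).Adj ⟨i, v⟩ ⟨j, w⟩} =
      (if (j : ℕ) + 1 = i then Ls.get j else 0) + (if j = i then Ls.get i - 1 else 0) +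
        (if (j : ℕ) = i + 1 then Ls.get j else 0) := by
  by_cases hji : j = i
  · subst hji
    simp [seqSum, Finset.filter_ne]
  · have hij : i ≠ j := Ne.symm hji
    have hij' : (i : ℕ) ≠ j := fun h => hij (Fin.ext h)
    simp only [seqSum, hij, false_and, false_or, Finset.filter_const, hji, if_false]
    split_ifs <;> simp <;> omega

-- `getD _ 0` gives the missing neighbouring blocks at both ends size `0`; the `if` is needed
-- because `0 - 1 = 0` in `ℕ`.
theorem degree_seqSum (i : Fin Ls.length) (v : Fin (Ls.get i)) :
    (seqSum Ls).degree ⟨i, v⟩ =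
      (if (i : ℕ) = 0 then 0 else Ls.getD (i - 1) 0) + (Ls.get i - 1) + Ls.getD (i + 1) 0 := by
  rw [← card_neighborFinset_eq_degree, neighborFinset_eq_filter, ← Finset.univ_sigma_univ,
    Finset.filter_sigma, Finset.card_sigma]
  simp only [card_adj_seqSum_block, Finset.sum_add_distrib, Finset.sum_ite_eq',
    Finset.mem_univ, if_true, Ls.sum_fin_ite_val_eq_getD]
  congr 2
  split_ifs with hi
  · exact Finset.sum_eq_zero fun j _ => if_neg (by omega)
  · rw [← Ls.sum_fin_ite_val_eq_getD]
    exact Finset.sum_congr rfl fun j _ => if_congr (by omega) rfl rfl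

end SeqSum

section BlockSizes

variable (Δ δ k : ℕ)

theorem length_blockSizes : (blockSizes Δ δ k).length = 3 * (k - 1) + 4 := by
  simp [blockSizes]
  omega

theorem sum_blockSizes (hδ : 1 ≤ δ) (hΔ : 1 ≤ Δ) (hk : 1 ≤ k) :
    (blockSizes Δ δ k).sum = (δ + 1) * k + Δ := by
  obtain ⟨r, rfl⟩ := Nat.exists_eq_add_of_le' hk
  simp only [blockSizes, List.sum_append, List.sum_flatten, List.map_replicate,
    List.sum_replicate, List.sum_cons, List.sum_nil, smul_eq_mul, Nat.add_sub_cancel, add_zero]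
  rw [Nat.sub_add_cancel hδ, Nat.add_sub_cancel' hΔ]
  ring

theorem getD_blockSizes (hk : 1 ≤ k) (m : ℕ) :
    (blockSizes Δ δ k).getD m 0 =
      if m = 0 then δ
      else if m < 3 * k then (if m % 3 = 0 then δ - 1 else 1)
      else if m = 3 * k then Δ - 1
      else 0 := by
  rcases lt_or_ge m 2 with hm | hm
  · interval_cases m
    · simp [blockSizes]
    · simp [blockSizes]
      omega
  have hF : (List.replicate (k - 1) [1, δ - 1, 1]).flatten.length = 3 * (k - 1) := by
    simp [mul_comm]
  rw [blockSizes, List.append_assoc, List.getD_append_right _ _ _ _ (by simpa),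
    show [δ, 1].length = 2 from rfl]
  rcases lt_or_ge (m - 2) (3 * (k - 1)) with hm' | hm'
  · rw [List.getD_append _ _ _ _ (by omega), List.getD_flatten_replicate _ _ _ _ (by simp; omega),
      List.length_cons, List.length_cons, List.length_singleton]
    have : (m - 2) % 3 < 3 := Nat.mod_lt _ (by norm_num)
    interval_cases h : (m - 2) % 3 <;>
      simp only [List.getD_cons_zero, List.getD_cons_succ] <;> split_ifs <;> omega
  · rw [List.getD_append_right _ _ _ _ (by omega), hF]
    obtain h | h | h : m - 2 - 3 * (k - 1) = 0 ∨ m - 2 - 3 * (k - 1) = 1 ∨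
        2 ≤ m - 2 - 3 * (k - 1) := by omega
    · rw [h, List.getD_cons_zero]
      split_ifs <;> omega
    · rw [h, List.getD_cons_succ, List.getD_cons_zero]
      split_ifs <;> omega
    · rw [List.getD_eq_default _ _ (by simpa)]
      split_ifs <;> omega

theorem degree_seqSum_blockSizes (hδ : 2 ≤ δ) (hΔ : 2 ≤ Δ) (hk : 1 ≤ k)
    (x : Σ i : Fin (blockSizes Δ δ k).length, Fin ((blockSizes Δ δ k).get i)) :
    (seqSum (blockSizes Δ δ k)).degree x =
      if (x.1 : ℕ) = 0 then δ
      else if (x.1 : ℕ) = 1 then δ + 1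
      else if (x.1 : ℕ) = 3 * k - 1 then Δ
      else if (x.1 : ℕ) = 3 * k then Δ - 1
      else δ := by
  obtain ⟨i, v⟩ := x
  have hi : (i : ℕ) ≤ 3 * k := by
    have := i.is_lt
    have := length_blockSizes Δ δ k
    omega
  rw [degree_seqSum, ← List.getD_eq_get _ 0]
  simp only [getD_blockSizes Δ δ k hk, Nat.add_one_ne_zero, if_false]
  generalize (i : ℕ) = m at hi ⊢
  split_ifs <;> omega

end BlockSizes

theorem seqSum_order_min_max_degree (n Δ δ : ℕ) (hδ3 : 3 ≤ δ) (hδΔ : δ < Δ)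
    (hΔn : Δ < n) (hdvd : (δ + 1) ∣ (n - Δ)) (k : ℕ) (hk : k = (n - Δ) / (δ + 1)) :
    Fintype.card (Σ i : Fin (blockSizes Δ δ k).length, Fin ((blockSizes Δ δ k).get i)) = n ∧
    (seqSum (blockSizes Δ δ k)).minDegree = δ ∧
    (seqSum (blockSizes Δ δ k)).maxDegree = Δ := by
  have hkn : (δ + 1) * k = n - Δ := by rw [hk, Nat.mul_div_cancel' hdvd]
  have hk1 : 1 ≤ k := by
    rw [hk]
    exact Nat.div_pos (Nat.le_of_dvd (by omega) hdvd) (by omega)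
  have hdeg := degree_seqSum_blockSizes Δ δ k (by omega) (by omega) hk1
  obtain ⟨x₀, hx₀⟩ := (blockSizes Δ δ k).exists_sigma_fst_eq_of_getD_pos (m := 0)
    (by rw [getD_blockSizes Δ δ k hk1, if_pos rfl]; omega)
  obtain ⟨x₁, hx₁⟩ := (blockSizes Δ δ k).exists_sigma_fst_eq_of_getD_pos (m := 3 * k - 1)
    (by rw [getD_blockSizes Δ δ k hk1]; split_ifs <;> omega)
  refine ⟨?_, ?_, ?_⟩
  · rw [List.card_sigma_fin_get, sum_blockSizes Δ δ k (by omega) (by omega) hk1]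
    omega
  · refine minDegree_eq_of_forall_le_degree _ x₀ (by rw [hdeg, hx₀, if_pos rfl]) fun x => ?_
    rw [hdeg]
    split_ifs <;> omega
  · refine maxDegree_eq_of_forall_degree_le _ x₁ (by rw [hdeg, hx₁]; split_ifs <;> omega)
      fun x => ?_
    rw [hdeg]
    split_ifs <;> omega
end

section
/- Let n, Δ, δ be integers with 3 ≤ δ < Δ < n and δ+1 dividing n−Δ. Then the remoteness of G_{n,Δ,δ} = K_δ + K_1 + [K_1 + K_{δ−1} + K_1]^{k−1} + K_1 + K_{Δ−1} (with k = (n−Δ)/(δ+1)) satisfies ρ(G_{n,Δ,δ}) > (3/2)·(n² − Δ²)/((n−1)(δ+1)) − 3/2. -/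
open Finset

/-!
An edge of a sequential sum changes the block index by at most one, so a vertex `v` of the
first block is at distance at least `i` from every vertex of block `i`. Hence the distance sum
from `v` is at least `∑ i, i * Lᵢ`, which for `G_{n,Δ,δ}` with `n = (δ + 1) k + Δ` equals
`(3/2)(n² - Δ²)/(δ + 1) - (3/2)(n - 1) + (3/2)(Δ - 1)`, and `Δ > 1`.
-/

/-- `∑ i, i * L[i]`, by recursion on `L`: prepending a block shifts every index by one. -/
def weightedIndexSum : List ℕ → ℕ
  | [] => 0
  | _ :: L => weightedIndexSum L + L.sum

@[simp] lemma weightedIndexSum_nil : weightedIndexSum [] = 0 := rfl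

@[simp] lemma weightedIndexSum_cons (a : ℕ) (L : List ℕ) :
    weightedIndexSum (a :: L) = weightedIndexSum L + L.sum := rfl

lemma sum_get_mul_eq_weightedIndexSum (L : List ℕ) :
    ∑ i : Fin L.length, L.get i * i = weightedIndexSum L := by
  induction L with
  | nil => simp
  | cons a L ih =>
    simp [Fin.sum_univ_succ, mul_add, Finset.sum_add_distrib, ← ih]

lemma weightedIndexSum_append (L₁ L₂ : List ℕ) :
    weightedIndexSum (L₁ ++ L₂) =
      weightedIndexSum L₁ + weightedIndexSum L₂ + L₁.length * L₂.sum := by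
  induction L₁ with
  | nil => simp
  | cons a L₁ ih =>
    simp only [List.cons_append, weightedIndexSum_cons, ih, List.sum_append, List.length_cons]
    ring

lemma two_mul_weightedIndexSum_flatten_replicate (B : List ℕ) (m : ℕ) :
    2 * weightedIndexSum (List.replicate m B).flatten + B.length * B.sum * m =
      2 * m * weightedIndexSum B + B.length * B.sum * m ^ 2 := by
  induction m with
  | zero => simp
  | succ m ih =>
    rw [List.replicate_succ, List.flatten_cons, weightedIndexSum_append, List.sum_flatten,
      List.map_replicate, List.sum_replicate, smul_eq_mul]
    linear_combination ih

lemma two_mul_weightedIndexSum_blockSizes (Δ δ m : ℕ) (hδ : 1 ≤ δ) (hΔ : 1 ≤ Δ) :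
    2 * weightedIndexSum (blockSizes Δ δ (m + 1)) =
      3 * (δ + 1) * (m ^ 2 + m) + 6 * Δ * (m + 1) := by
  have hB : ([1, δ - 1, 1] : List ℕ).sum = δ + 1 := by simp; omega
  have hBw : weightedIndexSum [1, δ - 1, 1] = δ + 1 := by simp; omega
  have hrep := two_mul_weightedIndexSum_flatten_replicate [1, δ - 1, 1] m
  have htail : ([1, Δ - 1] : List ℕ).sum = Δ := by simp; omega
  rw [hB, hBw] at hrep
  simp only [blockSizes, Nat.add_sub_cancel, weightedIndexSum_append, List.sum_flatten,
    List.length_append, List.length_flatten, List.map_replicate, List.sum_replicate, smul_eq_mul,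
    hB, htail]
  simp only [List.length_cons, List.length_nil, weightedIndexSum_cons, weightedIndexSum_nil,
    List.sum_cons, List.sum_nil] at hrep ⊢
  zify [hΔ] at hrep ⊢
  linear_combination hrep

section seqSum

variable {L : List ℕ}

lemma seqSum_adj_fst_le {x y : Σ i : Fin L.length, Fin (L.get i)} (h : (seqSum L).Adj x y) :
    (y.1 : ℕ) ≤ x.1 + 1 := by
  rcases h with ⟨h, -⟩ | h | h <;> omega

lemma seqSum_walk_fst_le {x y : Σ i : Fin L.length, Fin (L.get i)} (p : (seqSum L).Walk x y) :
    (y.1 : ℕ) ≤ x.1 + p.length := by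
  induction p with
  | nil => simp
  | cons h _ ih => have := seqSum_adj_fst_le h; rw [SimpleGraph.Walk.length_cons]; omega

lemma seqSum_fst_le_dist {x y : Σ i : Fin L.length, Fin (L.get i)} (h : (seqSum L).Reachable x y) :
    (y.1 : ℕ) ≤ x.1 + (seqSum L).dist x y := by
  obtain ⟨p, hp⟩ := h.exists_walk_length_eq_dist
  exact hp ▸ seqSum_walk_fst_le p

lemma seqSum_reachable_of_fst_eq {x y : Σ i : Fin L.length, Fin (L.get i)} (h : x.1 = y.1) :
    (seqSum L).Reachable x y := by
  by_cases hxy : x = y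
  · exact hxy ▸ .refl x
  · exact SimpleGraph.Adj.reachable (Or.inl ⟨h, hxy⟩)

lemma seqSum_preconnected (hpos : ∀ x ∈ L, 0 < x) : (seqSum L).Preconnected := by
  have hne (i : Fin L.length) : 0 < L.get i := hpos _ (L.get_mem i)
  have from_first : ∀ (j : ℕ) (x y : Σ i : Fin L.length, Fin (L.get i)), (x.1 : ℕ) = 0 →
      (y.1 : ℕ) = j → (seqSum L).Reachable x y := by
    intro j
    induction j with
    | zero => exact fun x y hx hy => seqSum_reachable_of_fst_eq (Fin.ext (hx.trans hy.symm))
    | succ j ih =>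
      intro x y hx hy
      have hj : j < L.length := by omega
      let z : Σ i : Fin L.length, Fin (L.get i) := ⟨⟨j, hj⟩, ⟨0, hne _⟩⟩
      have hzy : (seqSum L).Adj z y := Or.inr (Or.inl hy.symm)
      exact (ih x z hx rfl).trans hzy.reachable
  intro x y
  have h0 : 0 < L.length := x.1.pos
  let z : Σ i : Fin L.length, Fin (L.get i) := ⟨⟨0, h0⟩, ⟨0, hne _⟩⟩
  exact (from_first _ z x rfl rfl).symm.trans (from_first _ z y rfl rfl)

lemma weightedIndexSum_le_sum_dist (hpos : ∀ x ∈ L, 0 < x)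
    (v : Σ i : Fin L.length, Fin (L.get i)) (hv : (v.1 : ℕ) = 0) :
    weightedIndexSum L ≤ ∑ u, (seqSum L).dist v u := by
  calc weightedIndexSum L = ∑ u : Σ i : Fin L.length, Fin (L.get i), (u.1 : ℕ) := by
        rw [← sum_get_mul_eq_weightedIndexSum, Fintype.sum_sigma]
        simp
    _ ≤ ∑ u, (seqSum L).dist v u := Finset.sum_le_sum fun u _ => by
        simpa [hv] using seqSum_fst_le_dist (seqSum_preconnected hpos v u)

end seqSum

lemma blockSizes_pos {Δ δ k : ℕ} (hδ : 2 ≤ δ) (hΔ : 2 ≤ Δ) : ∀ x ∈ blockSizes Δ δ k, 0 < x := by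
  intro x hx
  simp only [blockSizes, List.mem_append, List.mem_flatten, List.mem_replicate, List.mem_cons,
    List.not_mem_nil, or_false] at hx
  rcases hx with ((rfl | rfl) | ⟨_, ⟨-, rfl⟩, hx⟩) | rfl | rfl
  case inl.inr =>
    simp only [List.mem_cons, List.not_mem_nil, or_false] at hx
    omega
  all_goals omega

lemma bound_eq_weightedIndexSum_sub {n Δ δ m : ℕ} (hδ : 1 ≤ δ) (hΔ : 1 ≤ Δ)
    (hn : n = (δ + 1) * (m + 1) + Δ) :
    3 / 2 * ((n : ℝ) ^ 2 - (Δ : ℝ) ^ 2) / ((δ : ℝ) + 1) - 3 / 2 * ((n : ℝ) - 1) =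
      weightedIndexSum (blockSizes Δ δ (m + 1)) - 3 / 2 * ((Δ : ℝ) - 1) := by
  have h : (2 * weightedIndexSum (blockSizes Δ δ (m + 1)) : ℝ) =
      3 * (δ + 1) * (m ^ 2 + m) + 6 * Δ * (m + 1) := by
    exact_mod_cast two_mul_weightedIndexSum_blockSizes Δ δ m hδ hΔ
  subst hn
  field_simp
  push_cast
  linear_combination (-(δ : ℝ) - 1) * h

/-- Some vertex of `G_{n,Δ,δ}` has average distance greater than
`(3/2)(n²-Δ²)/((n-1)(δ+1)) - 3/2`; i.e. the remoteness exceeds this bound. -/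
theorem seqSum_remoteness_lower_bound (n Δ δ : ℕ) (hδ3 : 3 ≤ δ) (hδΔ : δ < Δ)
    (hΔn : Δ < n) (hdvd : (δ + 1) ∣ (n - Δ))
    (k : ℕ) (hk : k = (n - Δ) / (δ + 1)) :
    ∃ v : (Σ i : Fin (blockSizes Δ δ k).length, Fin ((blockSizes Δ δ k).get i)),
      (∑ u, ((seqSum (blockSizes Δ δ k)).dist v u : ℝ)) / ((n : ℝ) - 1) >
        3 / 2 * ((n : ℝ) ^ 2 - (Δ : ℝ) ^ 2) / (((n : ℝ) - 1) * ((δ : ℝ) + 1)) - 3 / 2 := by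
  have hn : n = (δ + 1) * k + Δ := by rw [hk, Nat.mul_div_cancel' hdvd]; omega
  obtain ⟨m, rfl⟩ : ∃ m, k = m + 1 :=
    Nat.exists_eq_add_one.mpr (Nat.pos_of_ne_zero (by rintro rfl; omega))
  have hpos := blockSizes_pos (k := m + 1) (by omega : 2 ≤ δ) (by omega : 2 ≤ Δ)
  have h0 : 0 < (blockSizes Δ δ (m + 1)).length := by simp [blockSizes]
  let v : Σ i : Fin (blockSizes Δ δ (m + 1)).length, Fin ((blockSizes Δ δ (m + 1)).get i) :=
    ⟨⟨0, h0⟩, ⟨0, hpos _ (List.get_mem _ _)⟩⟩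
  refine ⟨v, ?_⟩
  have hW : (weightedIndexSum (blockSizes Δ δ (m + 1)) : ℝ) ≤ ∑ u, ((seqSum _).dist v u : ℝ) := by
    exact_mod_cast weightedIndexSum_le_sum_dist hpos v rfl
  have hbound := bound_eq_weightedIndexSum_sub (by omega) (by omega) hn
  have hn1 : (0 : ℝ) < (n : ℝ) - 1 := by
    rw [sub_pos, Nat.one_lt_cast]
    omega
  rw [gt_iff_lt, lt_div_iff₀ hn1]
  have hΔ : (1 : ℝ) < Δ := by exact_mod_cast (by omega : 1 < Δ)
  have hscale : (3 / 2 * ((n : ℝ) ^ 2 - (Δ : ℝ) ^ 2) / (((n : ℝ) - 1) * ((δ : ℝ) + 1)) - 3 / 2) *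
      ((n : ℝ) - 1) =
        3 / 2 * ((n : ℝ) ^ 2 - (Δ : ℝ) ^ 2) / ((δ : ℝ) + 1) - 3 / 2 * ((n : ℝ) - 1) := by
    field_simp
  linarith
end
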